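/- arXiv:1004.3615 — 8 statements merged into one kernel-verified Lean document; each statement's English description precedes it below -/
import Mathlib

section
/- Let n ≥ 1 and let < be a translation-invariant linear order on the additive group ℚ^n (a bi-ordering). Let H be the set of all x ∈ ℝ^n such that every neighbourhood of x contains both a point of ℚ^n ⊆ ℝ^n that is greater than 0 in the order < and a point of ℚ^n that is less than 0 in the order <. Then H is an ℝ-linear subspace of ℝ^n of dimension n − 1. -/
/-!
The positive cone `P = {q | 0 < q}` of a bi-ordering of `ℚ^n` is closed under addition and
positive rational scaling, so it is `ℚ`-convex and misses `0`. It also misses `0` in the real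
convex hull: by Carathéodory, a real convex combination of rational points with affinely
independent support solves a rational linear system with a unique solution, so its weights are
rational. Hence (in finite dimension) the closure of the real convex hull of `P` is not everything,
and separating a point from it yields a nonzero functional `f` with `f ≤ 0` on `P`, hence `0 ≤ f`
on `-P`. As `ℚ^n` is dense, `closure P = {f ≤ 0}` and `closure (-P) = {0 ≤ f}`, and the set in
question is `closure P ∩ closure (-P) = ker f`.
-/

/-- A bi-ordering of an additive group: a strict total order that is
translation invariant. -/
def IsAddBiOrdering {A : Type*} [AddGroup A] (lt : A → A → Prop) : Prop :=
  IsStrictTotalOrder A lt ∧ ∀ x y z : A, lt x y → lt (x + z) (y + z)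

/-- The coordinatewise inclusion of `ℚ^n` into `ℝ^n`. -/
def ratIncl (n : ℕ) (q : Fin n → ℚ) : Fin n → ℝ := fun i => (q i : ℝ)

open Set

namespace IsAddBiOrdering

variable {V : Type*} [AddCommGroup V] {lt : V → V → Prop} {a b : V}

theorem neg_pos (hlt : IsAddBiOrdering lt) : lt 0 (-a) ↔ lt a 0 :=
  ⟨fun h => by simpa using hlt.2 0 (-a) a h, fun h => by simpa using hlt.2 a 0 (-a) h⟩

theorem add_pos (hlt : IsAddBiOrdering lt) (ha : lt 0 a) (hb : lt 0 b) : lt 0 (a + b) :=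
  have := hlt.1
  trans_of lt hb (by simpa using hlt.2 0 a b ha)

theorem nsmul_pos (hlt : IsAddBiOrdering lt) (ha : lt 0 a) {k : ℕ} (hk : k ≠ 0) :
    lt 0 (k • a) := by
  obtain ⟨k, rfl⟩ := Nat.exists_eq_succ_of_ne_zero hk
  induction k with
  | zero => simpa using ha
  | succ k ih => exact succ_nsmul a (k + 1) ▸ hlt.add_pos (ih k.succ_ne_zero) ha

theorem pos_of_nsmul_pos (hlt : IsAddBiOrdering lt) {k : ℕ} (hk : k ≠ 0) (h : lt 0 (k • a)) :
    lt 0 a := by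
  have := hlt.1
  rcases trichotomous_of lt 0 a with ha | rfl | ha
  · exact ha
  · rw [smul_zero] at h
    exact absurd h (irrefl_of lt 0)
  · have h' := hlt.nsmul_pos (hlt.neg_pos.2 ha) hk
    rw [smul_neg, hlt.neg_pos] at h'
    exact absurd h (asymm_of lt h')

theorem smul_pos [Module ℚ V] (hlt : IsAddBiOrdering lt) {c : ℚ} (hc : 0 < c) (ha : lt 0 a) :
    lt 0 (c • a) := by
  have hnum := Rat.num_pos.2 hc
  obtain ⟨k, hk⟩ := Int.eq_ofNat_of_zero_le hnum.le
  have hk0 : k ≠ 0 := by rintro rfl; omega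
  have key : c.den • (c • a) = k • a := by
    rw [← Nat.cast_smul_eq_nsmul ℚ, ← Nat.cast_smul_eq_nsmul ℚ, smul_smul, Rat.den_mul_eq_num,
      hk]
    norm_cast
  exact hlt.pos_of_nsmul_pos c.den_nz (key ▸ hlt.nsmul_pos ha hk0)

theorem convex_setOf_pos [Module ℚ V] (hlt : IsAddBiOrdering lt) :
    Convex ℚ {a : V | lt 0 a} := by
  intro a ha b hb s t hs ht hst
  rcases hs.eq_or_lt with rfl | hs
  · simpa [(zero_add t).symm.trans hst] using hb
  rcases ht.eq_or_lt with rfl | ht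
  · simpa [(add_zero s).symm.trans hst] using ha
  exact hlt.add_pos (hlt.smul_pos hs ha) (hlt.smul_pos ht hb)

theorem exists_pos [Nontrivial V] (hlt : IsAddBiOrdering lt) : ∃ a, lt 0 a := by
  have := hlt.1
  obtain ⟨a, ha⟩ := exists_ne (0 : V)
  rcases trichotomous_of lt 0 a with h | h | h
  · exact ⟨a, h⟩
  · exact absurd h.symm ha
  · exact ⟨-a, hlt.neg_pos.2 h⟩

end IsAddBiOrdering

open Matrix in
theorem Matrix.exists_comp_eq_of_map_mulVec_eq {K L m k : Type*} [Field K] [Field L]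
    [Fintype m] [Fintype k] (f : K →+* L) {A : Matrix m k K} (hA : Function.Injective A.mulVec)
    {w : k → L} {b : m → K} (h : A.map f *ᵥ w = f ∘ b) :
    ∃ c : k → K, f ∘ c = w ∧ A *ᵥ c = b := by
  classical
  obtain ⟨g, hg⟩ := A.mulVecLin.exists_leftInverse_of_injective (LinearMap.ker_eq_bot.2 hA)
  set B := LinearMap.toMatrix' g
  have hBA : B * A = 1 := by
    rw [← LinearMap.toMatrix'_id, ← hg, LinearMap.toMatrix'_comp, ← Matrix.toLin'_apply',
      LinearMap.toMatrix'_toLin']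
  have hc : f ∘ (B *ᵥ b) = w := funext fun i => by
    rw [Function.comp_apply, RingHom.map_mulVec, ← h, mulVec_mulVec, ← Matrix.map_mul, hBA,
      Matrix.map_one f f.map_zero f.map_one, one_mulVec]
  refine ⟨B *ᵥ b, hc, funext fun i => f.injective ?_⟩
  rw [RingHom.map_mulVec, hc, h, Function.comp_apply]

section Separation

variable {E : Type*} [NormedAddCommGroup E] [NormedSpace ℝ E] [FiniteDimensional ℝ E]

theorem Convex.closure_ne_univ {s : Set E} (hs : Convex ℝ s) {x : E} (hx : x ∉ s) :
    closure s ≠ univ := by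
  intro hcl
  have hspan : affineSpan ℝ s = ⊤ := by
    refine AffineSubspace.coe_eq_univ_iff _ |>.1 (univ_subset_iff.1 ?_)
    exact hcl ▸ closure_minimal (subset_affineSpan ℝ s)
      (AffineSubspace.closed_of_finiteDimensional _)
  obtain ⟨y, hy⟩ := (hs.interior_nonempty_iff_affineSpan_eq_top).2 hspan
  have hx' := hs.combo_interior_closure_mem_interior hy (hcl ▸ mem_univ ((2 : ℝ) • x - y))
    (a := 1 / 2) (b := 1 / 2) (by norm_num) (by norm_num) (by norm_num)
  exact hx (interior_subset (by convert hx' using 1; module))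

theorem exists_ne_zero_nonpos_of_zero_notMem_convexHull {s : Set E} (hne : s.Nonempty)
    (hsmul : ∀ x ∈ s, ∀ k : ℕ, k ≠ 0 → k • x ∈ s)
    (h0 : (0 : E) ∉ convexHull ℝ s) :
    ∃ f : StrongDual ℝ E, f ≠ 0 ∧ ∀ x ∈ s, f x ≤ 0 := by
  obtain ⟨z, hz⟩ :=
    (ne_univ_iff_exists_notMem _).1 ((convex_convexHull ℝ s).closure_ne_univ h0)
  obtain ⟨f, u, hfC, hfz⟩ :=
    geometric_hahn_banach_closed_point (convex_convexHull ℝ s).closure isClosed_closure hz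
  have hfs : ∀ x ∈ s, f x < u := fun x hx => hfC x (subset_closure (subset_convexHull ℝ s hx))
  refine ⟨f, ?_, fun x hx => ?_⟩
  · rintro rfl
    obtain ⟨x, hx⟩ := hne
    simpa using (hfs x hx).trans hfz
  · by_contra! hpos
    obtain ⟨k, hk⟩ := exists_nat_gt (u / f x)
    have hkx := hfs _ (hsmul x hx (k + 1) k.succ_ne_zero)
    rw [map_nsmul, nsmul_eq_mul, Nat.cast_succ, add_one_mul] at hkx
    rw [div_lt_iff₀ hpos] at hk
    linarith

end Separation

theorem mem_closure_image_iff_nhds {X Y : Type*} [TopologicalSpace Y] (φ : X → Y) (S : Set X)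
    (y : Y) : y ∈ closure (φ '' S) ↔ ∀ U ∈ nhds y, ∃ x, φ x ∈ U ∧ x ∈ S := by
  simp [mem_closure_iff_nhds, Set.Nonempty, and_comm]

theorem ContinuousLinearMap.closure_setOf_lt_zero {E : Type*} [NormedAddCommGroup E]
    [NormedSpace ℝ E] {f : StrongDual ℝ E} (hf : f ≠ 0) :
    closure {x | f x < 0} = {x | f x ≤ 0} := by
  have hopen : IsOpenMap f := LinearMap.isOpenMap_of_finiteDimensional _
    (LinearMap.surjective (ContinuousLinearMap.coe_injective.ne_iff.2 hf))
  change closure (f ⁻¹' Iio 0) = f ⁻¹' Iic 0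
  rw [← hopen.preimage_closure_eq_closure_preimage f.continuous, closure_Iio]

section RatIncl

variable {n : ℕ}

theorem ratIncl_zero : ratIncl n 0 = 0 := by
  ext; simp [ratIncl]

theorem ratIncl_neg (q : Fin n → ℚ) : ratIncl n (-q) = -ratIncl n q := by
  ext; simp [ratIncl]

theorem ratIncl_nsmul (k : ℕ) (q : Fin n → ℚ) : ratIncl n (k • q) = k • ratIncl n q := by
  ext; simp [ratIncl]

theorem denseRange_ratIncl : DenseRange (ratIncl n) :=
  DenseRange.piMap fun _ => Rat.denseRange_cast

theorem mem_convexHull_of_ratIncl_mem_convexHull {S : Set (Fin n → ℚ)} {q : Fin n → ℚ}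
    (h : ratIncl n q ∈ convexHull ℝ (ratIncl n '' S)) : q ∈ convexHull ℚ S := by
  obtain ⟨ι, _, y, w, hyS, hy, hw0, hw1, hwq⟩ := eq_pos_convex_span_of_mem_convexHull h
  choose p hpS hpy using fun i => hyS ⟨i, rfl⟩
  -- Row `none` of `A` records `∑ i, w i = 1`, row `some j` the `j`-th coordinate of
  -- `∑ i, w i • p i`.
  let A : Matrix (Option (Fin n)) ι ℚ := Matrix.of fun o i => o.elim 1 (p i)
  have hA : Function.Injective A.mulVec := (injective_iff_map_eq_zero A.mulVecLin).2 fun c hc => by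
    change A.mulVec c = 0 at hc
    have h1 : ∑ i, c i = 0 := by simpa [A, Matrix.mulVec, dotProduct] using congrFun hc none
    have h2 : ∑ i, (c i : ℝ) • y i = 0 := funext fun j => by
      simpa [A, Matrix.mulVec, dotProduct, ← hpy, ratIncl, mul_comm] using
        congrArg (Rat.cast (K := ℝ)) (congrFun hc (some j))
    funext i
    exact_mod_cast affineIndependent_iff.1 hy Finset.univ (fun i => (c i : ℝ))
      (by exact_mod_cast h1) h2 i (Finset.mem_univ i)
  have hAw : (A.map (Rat.castHom ℝ)).mulVec w = Rat.castHom ℝ ∘ fun o => o.elim 1 q := by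
    funext o
    cases o with
    | none => simpa [A, Matrix.mulVec, dotProduct, Matrix.map_apply] using hw1
    | some j =>
      simpa [A, Matrix.mulVec, dotProduct, Matrix.map_apply, ← hpy, ratIncl, mul_comm] using
        congrFun hwq j
  obtain ⟨c, hcw, hc⟩ := Matrix.exists_comp_eq_of_map_mulVec_eq (Rat.castHom ℝ) hA hAw
  have h1 : ∑ i, c i = 1 := by simpa [A, Matrix.mulVec, dotProduct] using congrFun hc none
  have h2 : ∑ i, c i • p i = q := funext fun j => by
    simpa [A, Matrix.mulVec, dotProduct, mul_comm] using congrFun hc (some j)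
  have hc0 : ∀ i, 0 < c i := fun i => by simpa [← hcw] using hw0 i
  exact h2 ▸ (convex_convexHull ℚ S).sum_mem (fun i _ => (hc0 i).le) h1
    fun i _ => subset_convexHull ℚ S (hpS i)

theorem closure_image_ratIncl_eq {S : Set (Fin n → ℚ)} {f : StrongDual ℝ (Fin n → ℝ)}
    (hf : f ≠ 0) (hneg : ∀ q, f (ratIncl n q) < 0 → q ∈ S) (hle : ∀ q ∈ S, f (ratIncl n q) ≤ 0) :
    closure (ratIncl n '' S) = {x | f x ≤ 0} := by
  refine (closure_minimal ?_ (isClosed_le f.continuous continuous_const)).antisymm ?_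
  · rintro _ ⟨q, hq, rfl⟩
    exact hle q hq
  · rw [← ContinuousLinearMap.closure_setOf_lt_zero hf]
    refine closure_minimal ((denseRange_ratIncl.open_subset_closure_inter
      (isOpen_lt f.continuous continuous_const)).trans (closure_mono ?_)) isClosed_closure
    rintro _ ⟨hx, q, rfl⟩
    exact ⟨q, hneg q hx, rfl⟩

end RatIncl

namespace IsAddBiOrdering

variable {n : ℕ} {lt : (Fin n → ℚ) → (Fin n → ℚ) → Prop}

theorem zero_notMem_convexHull_image_ratIncl (hlt : IsAddBiOrdering lt) :
    (0 : Fin n → ℝ) ∉ convexHull ℝ (ratIncl n '' {q | lt 0 q}) := fun h => by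
  have := hlt.1
  rw [← ratIncl_zero] at h
  have h0 := mem_convexHull_of_ratIncl_mem_convexHull h
  rw [hlt.convex_setOf_pos.convexHull_eq] at h0
  exact irrefl_of lt 0 h0

theorem exists_ne_zero_nonpos (hlt : IsAddBiOrdering lt) (hn : 0 < n) :
    ∃ f : StrongDual ℝ (Fin n → ℝ), f ≠ 0 ∧ ∀ q, lt 0 q → f (ratIncl n q) ≤ 0 := by
  have : Nonempty (Fin n) := ⟨⟨0, hn⟩⟩
  obtain ⟨a, ha⟩ := hlt.exists_pos
  obtain ⟨f, hf0, hf⟩ :=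
    exists_ne_zero_nonpos_of_zero_notMem_convexHull ⟨_, mem_image_of_mem _ ha⟩
    (by rintro _ ⟨q, hq, rfl⟩ k hk; exact ⟨k • q, hlt.nsmul_pos hq hk, ratIncl_nsmul k q⟩)
    hlt.zero_notMem_convexHull_image_ratIncl
  exact ⟨f, hf0, fun q hq => hf _ (mem_image_of_mem _ hq)⟩

theorem pos_of_apply_ratIncl_neg (hlt : IsAddBiOrdering lt) {f : StrongDual ℝ (Fin n → ℝ)}
    (hf : ∀ q, lt 0 q → f (ratIncl n q) ≤ 0) {q : Fin n → ℚ} (hq : f (ratIncl n q) < 0) :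
    lt 0 q := by
  have := hlt.1
  rcases trichotomous_of lt 0 q with h | rfl | h
  · exact h
  · simp [ratIncl_zero] at hq
  · have := hf _ (hlt.neg_pos.2 h)
    rw [ratIncl_neg, map_neg] at this
    linarith

end IsAddBiOrdering

theorem boundary_set_is_hyperplane
    (n : ℕ) (hn : 0 < n)
    (lt : (Fin n → ℚ) → (Fin n → ℚ) → Prop) (hlt : IsAddBiOrdering lt) :
    ∃ H : Submodule ℝ (Fin n → ℝ),
      (H : Set (Fin n → ℝ)) =
        {x : Fin n → ℝ | ∀ U ∈ nhds x,
          (∃ q : Fin n → ℚ, ratIncl n q ∈ U ∧ lt 0 q) ∧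
          (∃ q : Fin n → ℚ, ratIncl n q ∈ U ∧ lt q 0)} ∧
      Module.finrank ℝ H = n - 1 := by
  obtain ⟨f, hf0, hf⟩ := hlt.exists_ne_zero_nonpos hn
  have hpos : closure (ratIncl n '' {q | lt 0 q}) = {x | f x ≤ 0} :=
    closure_image_ratIncl_eq hf0 (fun _ => hlt.pos_of_apply_ratIncl_neg hf) hf
  have hneg : closure (ratIncl n '' {q | lt q 0}) = {x | (-f) x ≤ 0} :=
    closure_image_ratIncl_eq (neg_ne_zero.2 hf0)
      (fun q hq => hlt.neg_pos.1
        (hlt.pos_of_apply_ratIncl_neg hf (by simpa [ratIncl_neg] using hq)))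
      (fun q hq => by simpa [ratIncl_neg] using hf _ (hlt.neg_pos.2 hq))
  refine ⟨LinearMap.ker (f : (Fin n → ℝ) →ₗ[ℝ] ℝ), ?_, ?_⟩
  · ext x
    have hP := mem_closure_image_iff_nhds (ratIncl n) {q | lt 0 q} x
    have hN := mem_closure_image_iff_nhds (ratIncl n) {q | lt q 0} x
    simp only [hpos, hneg, mem_ofPred_eq] at hP hN
    simp only [SetLike.mem_coe, LinearMap.mem_ker, mem_ofPred_eq, imp_and, forall_and, ← hP,
      ← hN]
    simp [le_antisymm_iff]
  · have := Module.Dual.finrank_ker_add_one_of_ne_zero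
      (ContinuousLinearMap.coe_injective.ne_iff.2 hf0)
    rw [Module.finrank_fin_fun] at this
    omega
end

section
/- Let H be a normal subgroup of a group G such that both H and the quotient group G/H are bi-orderable. Then G is bi-orderable if and only if there exists a bi-ordering < of H that is preserved under conjugation by every element of G, i.e. for all g ∈ G and h₁, h₂ ∈ H, h₁ < h₂ implies g⁻¹h₁g < g⁻¹h₂g. -/
/-- A bi-ordering of a group `G`: a strict total order invariant under
multiplication on both sides. -/
def IsBiOrdering {G : Type*} [Group G] (lt : G → G → Prop) : Prop :=
  IsStrictTotalOrder G lt ∧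
    (∀ f g h : G, lt g h → lt (f * g) (f * h)) ∧
    (∀ f g h : G, lt g h → lt (g * f) (h * f))

/-- A group is bi-orderable if it admits a bi-ordering. -/
def BiOrderable (G : Type*) [Group G] : Prop :=
  ∃ lt : G → G → Prop, IsBiOrdering lt

/-!
A bi-ordering is the same as its positive cone `P = {x | 1 < x}`: a conjugation-invariant
subsemigroup with `G = P ⊔ {1} ⊔ P⁻¹`, from which the order is recovered as
`a < b ↔ a⁻¹ * b ∈ P`. Given cones of `G ⧸ H` and of `H`, the elements of `G` positive in `G ⧸ H`
together with the positive elements of `H` form a cone of `G` (the lexicographic order); its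
invariance under conjugation by `G` is exactly what the hypothesis on the order of `H` provides.
The converse is restriction.
-/

open Function

structure IsPositiveCone {G : Type*} [Group G] (P : Set G) : Prop where
  mul_mem {x y : G} : x ∈ P → y ∈ P → x * y ∈ P
  one_notMem : (1 : G) ∉ P
  mem_or_eq_one_or_inv_mem (x : G) : x ∈ P ∨ x = 1 ∨ x⁻¹ ∈ P
  conj_mem (g : G) {x : G} : x ∈ P → g⁻¹ * x * g ∈ P

namespace IsBiOrdering

variable {G : Type*} [Group G] {lt : G → G → Prop}

theorem comap {K : Type*} [Group K] (hlt : IsBiOrdering lt) (f : K →* G) (hf : Injective f) :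
    IsBiOrdering (lt on f) := by
  obtain ⟨hto, hl, hr⟩ := hlt
  refine ⟨haveI := hto; hf.isStrictTotalOrder_onFun (r := lt), fun a x y h => ?_, fun a x y h => ?_⟩
  · simpa [onFun] using hl (f a) _ _ h
  · simpa [onFun] using hr (f a) _ _ h

theorem conj_lt_conj (hlt : IsBiOrdering lt) (g : G) {a b : G} (h : lt a b) :
    lt (g⁻¹ * a * g) (g⁻¹ * b * g) :=
  hlt.2.2 g _ _ (hlt.2.1 g⁻¹ _ _ h)

theorem isPositiveCone (hlt : IsBiOrdering lt) : IsPositiveCone {x | lt 1 x} := by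
  have hto := hlt.1
  have hl := hlt.2.1
  refine ⟨fun {x y} hx hy => ?_, irrefl (r := lt) 1, fun x => ?_, fun g x hx => ?_⟩
  · exact _root_.trans hx (by simpa using hl x _ _ hy)
  · rcases trichotomous (r := lt) 1 x with h | h | h
    · exact .inl h
    · exact .inr (.inl h.symm)
    · exact .inr (.inr (by simpa using hl x⁻¹ _ _ h))
  · simpa using hlt.conj_lt_conj g hx

end IsBiOrdering

namespace IsPositiveCone

variable {G : Type*} [Group G] {P : Set G}

theorem isBiOrdering (hP : IsPositiveCone P) : IsBiOrdering fun a b => a⁻¹ * b ∈ P := by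
  refine ⟨{ toTrichotomous := Std.trichotomous_of_rel_or_eq_or_rel_swap fun {a b} => ?_
            irrefl := fun a => by simpa using hP.one_notMem
            trans := fun a b c hab hbc => by simpa [mul_assoc] using hP.mul_mem hab hbc },
    fun f a b h => by simpa [mul_assoc] using h,
    fun f a b h => by simpa [mul_assoc] using hP.conj_mem f h⟩
  rcases hP.mem_or_eq_one_or_inv_mem (a⁻¹ * b) with h | h | h
  · exact .inl h
  · exact .inr (.inl (inv_mul_eq_one.mp h))
  · exact .inr (.inr (by simpa using h))

end IsPositiveCone

section Extension

variable {G : Type*} [Group G] {H : Subgroup G} [hN : H.Normal]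

def lexCone (ltQ : G ⧸ H → G ⧸ H → Prop) (ltH : H → H → Prop) : Set G :=
  {x | ltQ 1 (x : G ⧸ H)} ∪ Subtype.val '' {h | ltH 1 h}

theorem isPositiveCone_lexCone {ltQ : G ⧸ H → G ⧸ H → Prop}
    {ltH : H → H → Prop} (hltQ : IsBiOrdering ltQ) (hltH : IsBiOrdering ltH)
    (hconj : ∀ (g : G) (h₁ h₂ : H), ltH h₁ h₂ →
      ltH ⟨g⁻¹ * ↑h₁ * g, hN.conj_mem' _ h₁.2 g⟩ ⟨g⁻¹ * ↑h₂ * g, hN.conj_mem' _ h₂.2 g⟩) :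
    IsPositiveCone (lexCone ltQ ltH) := by
  unfold lexCone
  have cQ := hltQ.isPositiveCone
  have cH := hltH.isPositiveCone
  have mk_coe (h : H) : ((h : G) : G ⧸ H) = 1 := (QuotientGroup.eq_one_iff _).mpr h.2
  refine ⟨fun {x y} hx hy => ?_, ?_, fun x => ?_, fun g x hx => ?_⟩
  · rcases hx with hx | ⟨a, ha, rfl⟩ <;> rcases hy with hy | ⟨b, hb, rfl⟩
    · exact .inl (by simpa using cQ.mul_mem hx hy)
    · exact .inl (by simpa [mk_coe] using hx)
    · exact .inl (by simpa [mk_coe] using hy)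
    · exact .inr ⟨a * b, cH.mul_mem ha hb, rfl⟩
  · rintro (h | ⟨a, ha, h1⟩)
    · exact cQ.one_notMem (by simpa using h)
    · exact cH.one_notMem ((Subtype.ext h1 : a = 1) ▸ ha)
  · rcases cQ.mem_or_eq_one_or_inv_mem (x : G ⧸ H) with hx | hx | hx
    · exact .inl (.inl hx)
    · rcases cH.mem_or_eq_one_or_inv_mem ⟨x, (QuotientGroup.eq_one_iff x).mp hx⟩ with h | h | h
      · exact .inl (.inr ⟨_, h, rfl⟩)
      · exact .inr (.inl (congrArg Subtype.val h))
      · exact .inr (.inr (.inr ⟨_, h, rfl⟩))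
    · exact .inr (.inr (.inl (by simpa using hx)))
  · rcases hx with hx | ⟨a, ha, rfl⟩
    · exact .inl (by simpa using cQ.conj_mem (g : G ⧸ H) hx)
    · refine .inr ⟨⟨g⁻¹ * a * g, hN.conj_mem' _ a.2 g⟩, ?_, rfl⟩
      show ltH 1 _
      convert hconj g 1 a ha using 2
      simp

end Extension

theorem biOrderable_iff_conjugation_invariant_biordering_of_subgroup_general
    {G : Type*} [Group G] (H : Subgroup G) (hN : H.Normal)
    (hQ : BiOrderable (G ⧸ H)) :
    BiOrderable G ↔
      ∃ lt : H → H → Prop, IsBiOrdering lt ∧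
        ∀ (g : G) (h₁ h₂ : H), lt h₁ h₂ →
          lt ⟨g⁻¹ * ↑h₁ * g, hN.conj_mem' _ h₁.2 g⟩
            ⟨g⁻¹ * ↑h₂ * g, hN.conj_mem' _ h₂.2 g⟩ := by
  constructor
  · rintro ⟨lt, hlt⟩
    exact ⟨_, hlt.comap H.subtype H.subtype_injective, fun g _ _ h => hlt.conj_lt_conj g h⟩
  · rintro ⟨ltH, hltH, hconj⟩
    obtain ⟨ltQ, hltQ⟩ := hQ
    exact ⟨_, (isPositiveCone_lexCone hltQ hltH hconj).isBiOrdering⟩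

theorem biOrderable_iff_conjugation_invariant_biordering_of_subgroup
    {G : Type*} [Group G] (H : Subgroup G) (hN : H.Normal)
    (hH : BiOrderable H) (hQ : BiOrderable (G ⧸ H)) :
    BiOrderable G ↔
      ∃ lt : H → H → Prop, IsBiOrdering lt ∧
        ∀ (g : G) (h₁ h₂ : H), lt h₁ h₂ →
          lt ⟨g⁻¹ * ↑h₁ * g, hN.conj_mem' _ h₁.2 g⟩
            ⟨g⁻¹ * ↑h₂ * g, hN.conj_mem' _ h₂.2 g⟩ :=
  biOrderable_iff_conjugation_invariant_biordering_of_subgroup_general H hN hQ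
end

section
/- Let G be a nontrivial finitely generated group equipped with a bi-ordering <. Then there exists a subgroup C of G which is convex with respect to <, satisfies C ≠ G, and contains every convex subgroup of G other than G itself (so C is the unique maximal proper convex subgroup). Moreover C is a normal subgroup of G, the quotient group G/C is abelian, and every automorphism φ of G that preserves < satisfies φ(C) = C. -/
/-- A subgroup `C` is convex with respect to an order `lt` on `G` if whenever
`c₁, c₂ ∈ C` and `c₁ < g < c₂`, then `g ∈ C`. -/
def IsConvexSubgroup {G : Type*} [Group G] (lt : G → G → Prop) (C : Subgroup G) : Prop :=
  ∀ c₁ c₂ g : G, c₁ ∈ C → c₂ ∈ C → lt c₁ g → lt g c₂ → g ∈ C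

/-!
The maximal proper convex subgroup is the set `C` of elements whose powers are bounded above.
An element of a proper convex subgroup `D` has all its powers below `|e|` for any `e ∉ D`;
conversely, a common bound `H` for the generators and their inverses bounds every element of `G`
by a power of `H`, so `H ∉ C`. Since `C` is defined by the order alone, order-preserving
automorphisms, conjugations in particular, map it onto itself.

Modulo `C` the powers of every positive element are cofinal, so `G ⧸ C` is an archimedean
bi-ordered group and hence abelian (Hölder): either it has a least positive element, which then
generates it, or every positive `ε` dominates some `δ * δ` with `δ > 1`; squeezing `a` and `b`
between consecutive powers of `δ` puts `(b * a)⁻¹ * (a * b)` below `δ * δ`.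
-/

open Set

theorem IsConvexSubgroup.ordConnected {G : Type*} [Group G] [PartialOrder G] {N : Subgroup G}
    (hN : IsConvexSubgroup (· < ·) N) : (N : Set G).OrdConnected := by
  refine ⟨fun a ha b hb g ⟨hag, hgb⟩ => ?_⟩
  rcases hag.eq_or_lt with rfl | hag
  · exact ha
  rcases hgb.eq_or_lt with rfl | hgb
  · exact hb
  exact hN a b g ha hb hag hgb

section Holder

variable {α : Type*} [Group α] [LinearOrder α]

theorem exists_pow_le_lt_pow_succ [MulLeftMono α]
    (harch : ∀ (x : α) {y : α}, 1 < y → ∃ n : ℕ, x ≤ y ^ n) {d x : α} (hd : 1 < d) (hx : 1 ≤ x) :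
    ∃ n : ℕ, d ^ n ≤ x ∧ x < d ^ (n + 1) := by
  classical
  have hex : ∃ n : ℕ, x < d ^ (n + 1) := by
    obtain ⟨n, hn⟩ := harch x hd
    exact ⟨n, hn.trans_lt (pow_lt_pow_right' hd n.lt_succ_self)⟩
  refine ⟨Nat.find hex, ?_, Nat.find_spec hex⟩
  cases h : Nat.find hex with
  | zero => simpa using hx
  | succ n => exact not_lt.1 (Nat.find_min hex (h ▸ n.lt_succ_self))

theorem isCyclic_of_isLeast [MulLeftMono α] [MulRightMono α]
    (harch : ∀ (x : α) {y : α}, 1 < y → ∃ n : ℕ, x ≤ y ^ n) {ε : α}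
    (hε : IsLeast {g : α | 1 < g} ε) : IsCyclic α := by
  have hpow : ∀ x : α, 1 ≤ x → x ∈ Subgroup.zpowers ε := by
    intro x hx
    obtain ⟨n, hn, hn'⟩ := exists_pow_le_lt_pow_succ harch hε.1 hx
    have hlow : 1 ≤ (ε ^ n)⁻¹ * x := le_inv_mul_iff_mul_le.2 (by simpa using hn)
    have hup : (ε ^ n)⁻¹ * x < ε := inv_mul_lt_iff_lt_mul.2 (by rwa [← pow_succ])
    have hone : (ε ^ n)⁻¹ * x = 1 :=
      hlow.eq_or_lt.elim Eq.symm fun h => absurd (hε.2 h) hup.not_ge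
    exact ⟨n, by simpa using inv_mul_eq_one.1 hone⟩
  refine ⟨ε, fun x => Subgroup.mem_zpowers_iff.1 ?_⟩
  rcases le_total 1 x with hx | hx
  · exact hpow x hx
  · simpa only [inv_inv] using (Subgroup.zpowers ε).inv_mem (hpow x⁻¹ (one_le_inv'.2 hx))

theorem exists_one_lt_mul_self_le [MulLeftMono α] [MulRightMono α] {u ε : α} (hu : 1 < u)
    (huε : u < ε) : ∃ δ, 1 < δ ∧ δ * δ ≤ ε := by
  rcases le_or_gt (u * u) ε with h | h
  · exact ⟨u, hu, h⟩
  · refine ⟨u⁻¹ * ε, lt_inv_mul_iff_mul_lt.2 (by simpa using huε), ?_⟩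
    calc u⁻¹ * ε * (u⁻¹ * ε) ≤ u * (u⁻¹ * ε) :=
          mul_le_mul_left (inv_mul_lt_iff_lt_mul.2 h).le _
      _ = ε := mul_inv_cancel_left u ε

theorem mul_le_mul_comm_of_exists_mul_self_le [MulLeftMono α] [MulRightMono α]
    (harch : ∀ (x : α) {y : α}, 1 < y → ∃ n : ℕ, x ≤ y ^ n)
    (hdense : ∀ ε : α, 1 < ε → ∃ δ, 1 < δ ∧ δ * δ ≤ ε) {a b : α} (ha : 1 < a) (hb : 1 < b) :
    a * b ≤ b * a := by
  by_contra! hlt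
  obtain ⟨δ, hδ, hδε⟩ := hdense _ (lt_inv_mul_iff_mul_lt.2 (by simpa using hlt))
  obtain ⟨m, ham, ham'⟩ := exists_pow_le_lt_pow_succ harch hδ ha.le
  obtain ⟨n, hbn, hbn'⟩ := exists_pow_le_lt_pow_succ harch hδ hb.le
  have : a * b < a * b :=
    calc a * b < δ ^ (m + 1) * δ ^ (n + 1) := mul_lt_mul_of_lt_of_lt ham' hbn'
      _ = δ ^ n * δ ^ m * (δ * δ) := by
        rw [← sq, ← pow_add, ← pow_add, ← pow_add]
        ring_nf
      _ ≤ b * a * (δ * δ) := mul_le_mul_left (mul_le_mul' hbn ham) _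
      _ ≤ b * a * ((b * a)⁻¹ * (a * b)) := mul_le_mul_right hδε _
      _ = a * b := mul_inv_cancel_left _ _
  exact this.false

theorem commute_of_forall_one_lt [MulLeftMono α] {a b : α}
    (h : ∀ a b : α, 1 < a → 1 < b → Commute a b) : Commute a b := by
  have h1 : ∀ a b : α, 1 < a → Commute a b := fun a b ha => by
    rcases lt_trichotomy b 1 with hb | rfl | hb
    · simpa using (h a b⁻¹ ha (one_lt_inv'.2 hb)).inv_right
    · exact Commute.one_right a
    · exact h a b ha hb
  rcases lt_trichotomy a 1 with ha | rfl | ha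
  · simpa using (h1 a⁻¹ b (one_lt_inv'.2 ha)).inv_left
  · exact Commute.one_left b
  · exact h1 a b ha

theorem commute_of_archimedean [MulLeftMono α] [MulRightMono α]
    (harch : ∀ (x : α) {y : α}, 1 < y → ∃ n : ℕ, x ≤ y ^ n) (a b : α) : Commute a b := by
  by_cases hleast : ∃ ε, IsLeast {g : α | 1 < g} ε
  · obtain ⟨ε, hε⟩ := hleast
    obtain ⟨g, hg⟩ := (isCyclic_of_isLeast harch hε).exists_generator
    obtain ⟨m, rfl⟩ := hg a
    obtain ⟨n, rfl⟩ := hg b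
    exact Commute.zpow_zpow_self g m n
  · have hdense : ∀ ε : α, 1 < ε → ∃ δ, 1 < δ ∧ δ * δ ≤ ε := by
      intro ε hε
      obtain ⟨u, hu, huε⟩ : ∃ u, 1 < u ∧ u < ε := by
        simpa [IsLeast, lowerBounds, hε] using not_exists.1 hleast ε
      exact exists_one_lt_mul_self_le hu huε
    refine commute_of_forall_one_lt fun a b ha hb => le_antisymm ?_ ?_
    · exact mul_le_mul_comm_of_exists_mul_self_le harch hdense ha hb
    · exact mul_le_mul_comm_of_exists_mul_self_le harch hdense hb ha

end Holder

section QuotientOrder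

open QuotientGroup

variable {G : Type*} [Group G] [LinearOrder G] {N : Subgroup G}

def QuotientGroup.cosetLT (N : Subgroup G) (a b : G ⧸ N) : Prop :=
  ∀ x y : G, (x : G ⧸ N) = a → (y : G ⧸ N) = b → x < y

theorem IsConvexSubgroup.cosetLT_mk_of_lt [MulLeftMono G] [MulRightMono G]
    (hN : IsConvexSubgroup (· < ·) N) {x y : G} (hxy : x < y) (hne : (x : G ⧸ N) ≠ y) :
    cosetLT N x y := by
  intro x' y' hx hy
  by_contra! hle
  apply hne
  rw [QuotientGroup.eq] at hx hy ⊢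
  have hmem : x⁻¹ * x' * (y'⁻¹ * y) ∈ N := mul_mem (by simpa using N.inv_mem hx) hy
  refine hN.ordConnected.out N.one_mem hmem
    ⟨(lt_inv_mul_iff_mul_lt.2 (by simpa using hxy)).le, ?_⟩
  calc x⁻¹ * y = x⁻¹ * x' * (x'⁻¹ * y') * (y'⁻¹ * y) := by group
    _ ≤ x⁻¹ * x' * 1 * (y'⁻¹ * y) :=
      mul_le_mul_left (mul_le_mul_right (inv_mul_le_iff_le_mul.2 (by simpa using hle)) _) _
    _ = x⁻¹ * x' * (y'⁻¹ * y) := by rw [mul_one]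

theorem QuotientGroup.cosetLT_irrefl (a : G ⧸ N) : ¬ cosetLT N a a := by
  obtain ⟨x, rfl⟩ := QuotientGroup.mk_surjective a
  exact fun h => (h x x rfl rfl).false

theorem QuotientGroup.cosetLT_trans {a b c : G ⧸ N} (hab : cosetLT N a b) (hbc : cosetLT N b c) :
    cosetLT N a c := by
  obtain ⟨y, rfl⟩ := QuotientGroup.mk_surjective b
  exact fun x z hx hz => (hab x y hx rfl).trans (hbc y z rfl hz)

theorem IsConvexSubgroup.eq_of_not_cosetLT [MulLeftMono G] [MulRightMono G]
    (hN : IsConvexSubgroup (· < ·) N) {a b : G ⧸ N} (hab : ¬ cosetLT N a b)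
    (hba : ¬ cosetLT N b a) : a = b := by
  obtain ⟨x, rfl⟩ := QuotientGroup.mk_surjective a
  obtain ⟨y, rfl⟩ := QuotientGroup.mk_surjective b
  by_contra hne
  rcases lt_or_gt_of_ne (fun h => hne (congrArg _ h)) with h | h
  · exact hab (hN.cosetLT_mk_of_lt h hne)
  · exact hba (hN.cosetLT_mk_of_lt h (Ne.symm hne))

theorem QuotientGroup.cosetLT_mul_left [MulLeftMono G] [N.Normal] {a b : G ⧸ N} (c : G ⧸ N)
    (h : cosetLT N a b) : cosetLT N (c * a) (c * b) := by
  obtain ⟨c, rfl⟩ := QuotientGroup.mk_surjective c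
  intro z w hz hw
  have := h (c⁻¹ * z) (c⁻¹ * w) (by simp [hz]) (by simp [hw])
  exact (mul_lt_mul_iff_left _).1 this

theorem QuotientGroup.cosetLT_mul_right [MulRightMono G] [N.Normal] {a b : G ⧸ N} (c : G ⧸ N)
    (h : cosetLT N a b) : cosetLT N (a * c) (b * c) := by
  obtain ⟨c, rfl⟩ := QuotientGroup.mk_surjective c
  intro z w hz hw
  have := h (z * c⁻¹) (w * c⁻¹) (by simp [hz]) (by simp [hw])
  exact (mul_lt_mul_iff_right _).1 this

theorem IsConvexSubgroup.isStrictTotalOrder_cosetLT [MulLeftMono G] [MulRightMono G]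
    (hN : IsConvexSubgroup (· < ·) N) : IsStrictTotalOrder (G ⧸ N) (cosetLT N) where
  trichotomous _ _ := hN.eq_of_not_cosetLT
  irrefl := QuotientGroup.cosetLT_irrefl
  trans _ _ _ := QuotientGroup.cosetLT_trans

noncomputable abbrev IsConvexSubgroup.quotientLinearOrder [MulLeftMono G] [MulRightMono G]
    (hN : IsConvexSubgroup (· < ·) N) : LinearOrder (G ⧸ N) :=
  haveI := hN.isStrictTotalOrder_cosetLT
  letI := Classical.decRel (cosetLT N)
  linearOrderOfSTO (cosetLT N)

theorem IsConvexSubgroup.commute_quotient_of_forall_le_pow [MulLeftMono G] [MulRightMono G]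
    (hN : IsConvexSubgroup (· < ·) N) [N.Normal]
    (harch : ∀ d : G, 1 < d → d ∉ N → ∀ x : G, ∃ n : ℕ, x ≤ d ^ n) (a b : G ⧸ N) :
    Commute a b := by
  let := hN.quotientLinearOrder
  have hmono : Monotone (QuotientGroup.mk : G → G ⧸ N) := fun x y h => by
    by_cases hxy : (x : G ⧸ N) = y
    · exact hxy.le
    · exact le_of_lt (hN.cosetLT_mk_of_lt (h.lt_of_ne fun h => hxy (congrArg _ h)) hxy)
  have : MulLeftStrictMono (G ⧸ N) := ⟨fun c _ _ => cosetLT_mul_left c⟩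
  have : MulRightStrictMono (G ⧸ N) := ⟨fun c _ _ => cosetLT_mul_right c⟩
  have := mulLeftMono_of_mulLeftStrictMono (G ⧸ N)
  have := mulRightMono_of_mulRightStrictMono (G ⧸ N)
  refine commute_of_archimedean (fun y e he => ?_) a b
  obtain ⟨x, rfl⟩ := QuotientGroup.mk_surjective y
  obtain ⟨d, rfl⟩ := QuotientGroup.mk_surjective e
  have hd : d ∉ N := fun h => he.ne ((QuotientGroup.eq_one_iff d).2 h).symm
  obtain ⟨n, hn⟩ := harch d (he 1 d rfl rfl) hd x
  exact ⟨n, by simpa using hmono hn⟩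

end QuotientOrder

section ZPowBounds

variable {G : Type*} [Group G] [Preorder G]

theorem bddAbove_range_zpow_inv {x : G} (hx : BddAbove (range (x ^ · : ℤ → G))) :
    BddAbove (range (x⁻¹ ^ · : ℤ → G)) :=
  hx.mono <| by rintro _ ⟨n, rfl⟩; exact ⟨-n, by simp⟩

theorem bddAbove_range_zpow_zpow {x : G} (hx : BddAbove (range (x ^ · : ℤ → G))) (m : ℤ) :
    BddAbove (range ((x ^ m) ^ · : ℤ → G)) :=
  hx.mono <| by rintro _ ⟨n, rfl⟩; exact ⟨m * n, zpow_mul x m n⟩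

end ZPowBounds

section BoundedPowers

variable {G : Type*} [Group G] [LinearOrder G] [MulLeftMono G] [MulRightMono G]

theorem mabs_mul_le_sup_sq (x y : G) : |x * y|ₘ ≤ (|x|ₘ ⊔ |y|ₘ) ^ 2 := by
  rw [sq, mabs_le', mul_inv_rev]
  exact ⟨mul_le_mul' ((le_mabs_self x).trans le_sup_left) ((le_mabs_self y).trans le_sup_right),
    mul_le_mul' ((inv_le_mabs y).trans le_sup_right) ((inv_le_mabs x).trans le_sup_left)⟩

theorem bddAbove_range_zpow_of_mabs_le {x y : G} (hy : BddAbove (range (y ^ · : ℤ → G)))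
    (hxy : |x|ₘ ≤ y) : BddAbove (range (x ^ · : ℤ → G)) := by
  obtain ⟨k, hk⟩ := hy
  refine ⟨k, ?_⟩
  rintro _ ⟨n, rfl⟩
  obtain ⟨m, rfl | rfl⟩ := Int.eq_nat_or_neg n
  · calc x ^ (m : ℤ) = x ^ m := zpow_natCast x m
      _ ≤ y ^ m := pow_le_pow_left' ((le_mabs_self x).trans hxy) m
      _ ≤ k := by simpa using hk ⟨m, rfl⟩
  · calc x ^ (-m : ℤ) = x⁻¹ ^ m := by rw [zpow_neg, zpow_natCast, inv_pow]
      _ ≤ y ^ m := pow_le_pow_left' ((inv_le_mabs x).trans hxy) m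
      _ ≤ k := by simpa using hk ⟨m, rfl⟩

variable (G) in
def boundedPowersSubgroup : Subgroup G where
  carrier := {x | BddAbove (range (x ^ · : ℤ → G))}
  one_mem' := ⟨1, by rintro _ ⟨n, rfl⟩; simp⟩
  inv_mem' := bddAbove_range_zpow_inv
  mul_mem' {x y} hx hy := by
    have hmax : BddAbove (range ((|x|ₘ ⊔ |y|ₘ) ^ · : ℤ → G)) := by
      rcases max_choice |x|ₘ |y|ₘ with h | h <;> rw [h]
      · rcases mabs_choice x with h | h <;> rw [h]
        exacts [hx, bddAbove_range_zpow_inv hx]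
      · rcases mabs_choice y with h | h <;> rw [h]
        exacts [hy, bddAbove_range_zpow_inv hy]
    exact bddAbove_range_zpow_of_mabs_le (by simpa using bddAbove_range_zpow_zpow hmax 2)
      (mabs_mul_le_sup_sq x y)

theorem isConvexSubgroup_boundedPowersSubgroup :
    IsConvexSubgroup (· < ·) (boundedPowersSubgroup G) := by
  intro c₁ c₂ g hc₁ hc₂ h₁ h₂
  have hc : |c₁|ₘ * |c₂|ₘ ∈ boundedPowersSubgroup G :=
    mul_mem (mabs_mem_iff.2 hc₁) (mabs_mem_iff.2 hc₂)
  refine bddAbove_range_zpow_of_mabs_le hc (mabs_le'.2 ⟨?_, ?_⟩)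
  · exact h₂.le.trans ((le_mabs_self c₂).trans (le_mul_of_one_le_left' (one_le_mabs c₁)))
  · exact (inv_le_inv_iff.2 h₁.le).trans
      ((inv_le_mabs c₁).trans (le_mul_of_one_le_right' (one_le_mabs c₂)))

theorem IsConvexSubgroup.le_mabs_of_notMem {D : Subgroup G} (hD : IsConvexSubgroup (· < ·) D)
    {d e : G} (hd : d ∈ D) (he : e ∉ D) : d ≤ |e|ₘ := by
  by_contra! h
  exact he (mabs_mem_iff.1 (hD.ordConnected.out D.one_mem hd ⟨one_le_mabs e, h.le⟩))

theorem IsConvexSubgroup.le_boundedPowersSubgroup {D : Subgroup G}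
    (hD : IsConvexSubgroup (· < ·) D) (hne : D ≠ ⊤) : D ≤ boundedPowersSubgroup G := by
  obtain ⟨e, he⟩ := SetLike.exists_not_mem_of_ne_top D hne
  intro x hx
  refine ⟨|e|ₘ, ?_⟩
  rintro _ ⟨n, rfl⟩
  exact hD.le_mabs_of_notMem (D.zpow_mem hx n) he

theorem Group.FG.exists_forall_le_pow [Group.FG G] : ∃ h : G, ∀ g : G, ∃ n : ℕ, g ≤ h ^ n := by
  obtain ⟨S, hS, hSfin⟩ := Group.fg_iff.1 ‹Group.FG G›
  obtain ⟨h, hh⟩ := (hSfin.union hSfin.inv).bddAbove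
  refine ⟨h, fun g => ?_⟩
  have hg : g ∈ Subgroup.closure S := hS ▸ Subgroup.mem_top g
  suffices ∃ n : ℕ, g ≤ h ^ n ∧ g⁻¹ ≤ h ^ n from this.imp fun _ => And.left
  induction hg using Subgroup.closure_induction with
  | mem s hs =>
    exact ⟨1, by simpa using hh (Or.inl hs), by simpa using hh (Or.inr (by simpa using hs))⟩
  | one => exact ⟨0, by simp, by simp⟩
  | mul x y _ _ hx hy =>
    obtain ⟨m, hxm, hxm'⟩ := hx
    obtain ⟨n, hyn, hyn'⟩ := hy
    refine ⟨m + n, ?_, ?_⟩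
    · rw [pow_add]; exact mul_le_mul' hxm hyn
    · rw [mul_inv_rev, add_comm, pow_add]; exact mul_le_mul' hyn' hxm'
  | inv x _ hx =>
    obtain ⟨n, hxn, hxn'⟩ := hx
    exact ⟨n, hxn', by simpa using hxn⟩

theorem boundedPowersSubgroup_ne_top [Nontrivial G] [Group.FG G] :
    boundedPowersSubgroup G ≠ ⊤ := by
  intro htop
  obtain ⟨h, hh⟩ := Group.FG.exists_forall_le_pow (G := G)
  obtain ⟨k, hk⟩ : h ∈ boundedPowersSubgroup G := htop ▸ Subgroup.mem_top h
  obtain ⟨g, hg⟩ := exists_ne (1 : G)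
  obtain ⟨n, hn⟩ := hh (k * |g|ₘ)
  have hkn : h ^ n ≤ k := by simpa using hk ⟨n, rfl⟩
  exact (lt_mul_of_one_lt_right' k (one_lt_mabs.2 hg)).not_ge (hn.trans hkn)

theorem map_boundedPowersSubgroup_le {H : Type*} [Group H] [LinearOrder H] [MulLeftMono H]
    [MulRightMono H] (f : G →* H) (hf : Monotone f) :
    (boundedPowersSubgroup G).map f ≤ boundedPowersSubgroup H := by
  rintro _ ⟨x, ⟨k, hk⟩, rfl⟩
  refine ⟨f k, ?_⟩
  rintro _ ⟨n, rfl⟩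
  simpa using hf (hk ⟨n, rfl⟩)

instance boundedPowersSubgroup_normal : (boundedPowersSubgroup G).Normal :=
  ⟨fun x hx g => map_boundedPowersSubgroup_le (MulAut.conj g).toMonoidHom
    (fun _ _ h => mul_le_mul_left (mul_le_mul_right h g) g⁻¹) ⟨x, hx, rfl⟩⟩

theorem map_boundedPowersSubgroup_of_strictMono {H : Type*} [Group H] [LinearOrder H]
    [MulLeftMono H] [MulRightMono H] (φ : G ≃* H) (hφ : StrictMono φ) :
    (boundedPowersSubgroup G).map φ.toMonoidHom = boundedPowersSubgroup H := by
  refine le_antisymm (map_boundedPowersSubgroup_le _ hφ.monotone) fun x hx => ?_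
  have hφ' : Monotone φ.symm := fun a b h => hφ.le_iff_le.1 (by simpa using h)
  exact ⟨φ.symm x, map_boundedPowersSubgroup_le φ.symm.toMonoidHom hφ' ⟨x, hx, rfl⟩, by simp⟩

theorem exists_le_pow_of_notMem_boundedPowersSubgroup {d : G} (hd : 1 < d)
    (hd' : d ∉ boundedPowersSubgroup G) (x : G) : ∃ n : ℕ, x ≤ d ^ n := by
  obtain ⟨_, ⟨m, rfl⟩, hm⟩ := not_bddAbove_iff.1 hd' x
  refine ⟨m.toNat, ?_⟩
  calc x ≤ d ^ m := hm.le
    _ ≤ d ^ m * d ^ (m.toNat - m) := le_mul_of_one_le_right' (one_le_zpow hd.le (by omega))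
    _ = d ^ m.toNat := by rw [← zpow_add, add_sub_cancel, zpow_natCast]

end BoundedPowers

theorem exists_maximal_proper_convex_subgroup
    {G : Type*} [Group G] [Nontrivial G] [Group.FG G]
    (lt : G → G → Prop) (hlt : IsBiOrdering lt) :
    ∃ C : Subgroup G,
      IsConvexSubgroup lt C ∧ C ≠ ⊤ ∧
      (∀ D : Subgroup G, IsConvexSubgroup lt D → D ≠ ⊤ → D ≤ C) ∧
      ∃ hN : C.Normal,
        (∀ x y : G ⧸ C, x * y = y * x) ∧
        (∀ φ : G ≃* G, (∀ g h : G, lt g h → lt (φ g) (φ h)) →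
          C.map φ.toMonoidHom = C) := by
  have := hlt.1
  let : LinearOrder G := @linearOrderOfSTO G lt _ (Classical.decRel lt)
  have : MulLeftStrictMono G := ⟨fun f _ _ h => hlt.2.1 f _ _ h⟩
  have : MulRightStrictMono G := ⟨fun f _ _ h => hlt.2.2 f _ _ h⟩
  have := mulLeftMono_of_mulLeftStrictMono G
  have := mulRightMono_of_mulRightStrictMono G
  have hC := isConvexSubgroup_boundedPowersSubgroup (G := G)
  refine ⟨boundedPowersSubgroup G, hC, boundedPowersSubgroup_ne_top,
    fun D hD hne => hD.le_boundedPowersSubgroup hne, inferInstance, fun x y => ?_,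
    fun φ hφ => map_boundedPowersSubgroup_of_strictMono φ hφ⟩
  exact (hC.commute_quotient_of_forall_le_pow
    (fun _ => exists_le_pow_of_notMem_boundedPowersSubgroup) x y).eq
end

section
/- Let A be an additive abelian group equipped with a bi-ordering < (a translation-invariant linear order). Then there exists a translation-invariant linear order ≺ on the ℚ-vector space A ⊗_ℤ ℚ such that: (1) the canonical map A → A ⊗_ℤ ℚ, a ↦ a ⊗ 1, is strictly order-preserving from < to ≺; and (2) for every automorphism φ of A that preserves <, the induced map φ ⊗ id : A ⊗_ℤ ℚ → A ⊗_ℤ ℚ preserves ≺. -/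
open scoped TensorProduct

theorem IsAddBiOrdering.exists_linearOrder {A : Type*} [AddCommGroup A] {lt : A → A → Prop}
    (h : IsAddBiOrdering lt) :
    ∃ _ : LinearOrder A, IsOrderedAddMonoid A ∧ (· < ·) = lt := by
  classical
  have := h.1
  let L : LinearOrder A := linearOrderOfSTO lt
  refine ⟨L, { add_le_add_left := ?_ }, rfl⟩
  rintro a b (rfl | hab) c
  · exact le_rfl
  · exact Or.inr (h.2 a b c hab)

theorem IsAddBiOrdering.of_positive {G : Type*} [AddGroup G] {P : G → Prop} (zero : ¬P 0)
    (add : ∀ x y, P x → P y → P (x + y)) (trichotomy : ∀ x, x = 0 ∨ P x ∨ P (-x)) :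
    IsAddBiOrdering fun x y => P (y - x) := by
  refine ⟨?_, fun x y z => by simp only [add_sub_add_right_eq_sub, imp_self]⟩
  refine { trichotomous := fun x y hxy hyx => ?_, irrefl := fun x => ?_,
            trans := fun x y z hxy hyz => ?_ }
  · rcases trichotomy (y - x) with h | h | h
    · exact (sub_eq_zero.mp h).symm
    · exact absurd h hxy
    · exact absurd (by rwa [neg_sub] at h) hyx
  · simpa only [sub_self] using zero
  · simpa only [sub_add_sub_cancel] using add _ _ hyz hxy

namespace TensorProduct

variable {A : Type*} [AddCommGroup A]

theorem mul_nsmul_add_eq_tmul_one {x y : A ⊗[ℤ] ℚ} {n m : ℕ} {a b : A}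
    (hx : n • x = a ⊗ₜ 1) (hy : m • y = b ⊗ₜ 1) :
    (n * m) • (x + y) = (m • a + n • b) ⊗ₜ 1 :=
  calc (n * m) • (x + y) = m • n • x + n • m • y := by
        rw [smul_add, mul_smul, mul_smul, smul_comm n m x]
    _ = (m • a + n • b) ⊗ₜ 1 := by rw [hx, hy, add_tmul, smul_tmul', smul_tmul']

theorem exists_nsmul_eq_tmul_one (x : A ⊗[ℤ] ℚ) :
    ∃ n : ℕ, 0 < n ∧ ∃ a : A, n • x = a ⊗ₜ 1 := by
  induction x using TensorProduct.induction_on with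
  | zero => exact ⟨1, one_pos, 0, by simp⟩
  | tmul a q =>
    refine ⟨q.den, q.den_pos, q.num • a, ?_⟩
    calc q.den • a ⊗ₜ[ℤ] q = a ⊗ₜ (q.den • q) := (tmul_smul ..).symm
      _ = a ⊗ₜ (q.num • (1 : ℚ)) := by
        rw [nsmul_eq_mul, zsmul_eq_mul, mul_one, mul_comm, Rat.mul_den_eq_num]
      _ = (q.num • a) ⊗ₜ 1 := (smul_tmul ..).symm
  | add x y hx hy =>
    obtain ⟨n, hn, a, hna⟩ := hx
    obtain ⟨m, hm, b, hmb⟩ := hy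
    exact ⟨n * m, Nat.mul_pos hn hm, m • a + n • b, mul_nsmul_add_eq_tmul_one hna hmb⟩

instance : IsAddTorsionFree (A ⊗[ℤ] ℚ) :=
  have := IsAddTorsionFree.of_module_rat (ℚ ⊗[ℤ] A)
  (TensorProduct.comm ℤ A ℚ).injective.isAddTorsionFree
    (TensorProduct.comm ℤ A ℚ).toAddMonoidHom

theorem tmul_one_injective [IsAddTorsionFree A] :
    Function.Injective fun a : A => a ⊗ₜ[ℤ] (1 : ℚ) := by
  have : IsLocalizedModule (nonZeroDivisors ℤ) ((TensorProduct.mk ℤ A ℚ).flip 1) :=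
    IsLocalizedModule.of_linearEquiv _ (TensorProduct.mk ℤ ℚ A 1) (TensorProduct.comm ℤ ℚ A)
  refine (injective_iff_map_eq_zero ((TensorProduct.mk ℤ A ℚ).flip 1)).mpr fun a ha => ?_
  obtain ⟨s, hs⟩ := (IsLocalizedModule.eq_zero_iff (nonZeroDivisors ℤ) _).mp ha
  exact (smul_eq_zero.mp hs).resolve_left (nonZeroDivisors.coe_ne_zero s)

end TensorProduct

section IsRatPositive

open TensorProduct

variable {A : Type*} [AddCommGroup A] [LinearOrder A]

def IsRatPositive (x : A ⊗[ℤ] ℚ) : Prop :=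
  ∃ n : ℕ, 0 < n ∧ ∃ a : A, 0 < a ∧ n • x = a ⊗ₜ 1

theorem isRatPositive_tmul_one {a : A} (ha : 0 < a) : IsRatPositive (a ⊗ₜ[ℤ] (1 : ℚ)) :=
  ⟨1, one_pos, a, ha, one_smul ..⟩

theorem IsRatPositive.rTensor {B : Type*} [AddCommGroup B] [LinearOrder B]
    (g : A →ₗ[ℤ] B) (hg : ∀ a, 0 < a → 0 < g a) {x : A ⊗[ℤ] ℚ} (hx : IsRatPositive x) :
    IsRatPositive (g.rTensor ℚ x) := by
  obtain ⟨n, hn, a, ha, h⟩ := hx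
  exact ⟨n, hn, g a, hg a ha, by rw [← map_nsmul, h, LinearMap.rTensor_tmul]⟩

variable [IsOrderedAddMonoid A]

theorem not_isRatPositive_zero : ¬IsRatPositive (0 : A ⊗[ℤ] ℚ) := by
  rintro ⟨n, -, a, ha, h⟩
  rw [smul_zero, eq_comm, ← zero_tmul A (1 : ℚ)] at h
  exact ha.ne' (tmul_one_injective h)

theorem IsRatPositive.add {x y : A ⊗[ℤ] ℚ} (hx : IsRatPositive x) (hy : IsRatPositive y) :
    IsRatPositive (x + y) := by
  obtain ⟨n, hn, a, ha, hna⟩ := hx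
  obtain ⟨m, hm, b, hb, hmb⟩ := hy
  exact ⟨n * m, Nat.mul_pos hn hm, m • a + n • b,
    add_pos (nsmul_pos ha hm.ne') (nsmul_pos hb hn.ne'), mul_nsmul_add_eq_tmul_one hna hmb⟩

theorem isRatPositive_trichotomy (x : A ⊗[ℤ] ℚ) :
    x = 0 ∨ IsRatPositive x ∨ IsRatPositive (-x) := by
  obtain ⟨n, hn, a, h⟩ := exists_nsmul_eq_tmul_one x
  rcases lt_trichotomy a 0 with ha | rfl | ha
  · exact Or.inr (Or.inr ⟨n, hn, -a, neg_pos.mpr ha, by rw [smul_neg, h, neg_tmul]⟩)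
  · rw [zero_tmul] at h
    exact Or.inl ((smul_eq_zero.mp h).resolve_left hn.ne')
  · exact Or.inr (Or.inl ⟨n, hn, a, ha, h⟩)

end IsRatPositive

theorem biordering_extends_to_rational_tensor
    {A : Type*} [AddCommGroup A]
    (lt : A → A → Prop) (hlt : IsAddBiOrdering lt) :
    ∃ lt' : (A ⊗[ℤ] ℚ) → (A ⊗[ℤ] ℚ) → Prop,
      IsAddBiOrdering lt' ∧
      (∀ a b : A, lt a b → lt' (a ⊗ₜ[ℤ] (1 : ℚ)) (b ⊗ₜ[ℤ] (1 : ℚ))) ∧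
      (∀ φ : A ≃+ A, (∀ a b : A, lt a b → lt (φ a) (φ b)) →
        ∀ x y : A ⊗[ℤ] ℚ, lt' x y →
          lt' (LinearMap.rTensor ℚ φ.toAddMonoidHom.toIntLinearMap x)
              (LinearMap.rTensor ℚ φ.toAddMonoidHom.toIntLinearMap y)) := by
  obtain ⟨_, _, rfl⟩ := hlt.exists_linearOrder
  refine ⟨fun x y => IsRatPositive (y - x),
    .of_positive not_isRatPositive_zero (fun _ _ => .add) isRatPositive_trichotomy,
    fun a b hab => ?_, fun φ hφ x y hxy => ?_⟩
  · show IsRatPositive (_ - _)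
    rw [← TensorProduct.sub_tmul]
    exact isRatPositive_tmul_one (sub_pos.mpr hab)
  · show IsRatPositive (_ - _)
    rw [← map_sub]
    exact hxy.rTensor _ fun a ha => by simpa using hφ 0 a ha
end

section
/- (Hölder's theorem) Let G be a group equipped with an Archimedean bi-ordering <. Then there exists an injective group homomorphism f from G into the additive group of real numbers which is strictly order-preserving (g < h implies f(g) < f(h) in ℝ). In particular, G is abelian. -/
/-- A bi-ordering is Archimedean if for every `g ≠ 1` and every `h` there is an
integer `n` with `g^(-n) < h < g^n`. -/
def IsArchimedeanOrdering {G : Type*} [Group G] (lt : G → G → Prop) : Prop :=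
  ∀ g h : G, g ≠ 1 → ∃ n : ℤ, lt (g ^ (-n)) h ∧ lt h (g ^ n)
/-!
If `x * y < y * x`, put `ε = (x * y)⁻¹ * (y * x) > 1`. When `ε` is the least element above `1`,
the Archimedean property makes every element a power of `ε`, so `x` and `y` commute. Otherwise
some `δ > 1` has `δ * δ ≤ ε`; trapping `x` and `y` between consecutive powers of `δ` gives
`y * x < x * y * (δ * δ) ≤ y * x`. Hence `G` is abelian, and an Archimedean linearly ordered
abelian group embeds into `ℝ` (`Archimedean.exists_orderAddMonoidHom_real_injective`).
-/

section ArchimedeanBiOrdered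

variable {G : Type*} [Group G] [LinearOrder G]

lemma strictMono_zpow_of_one_lt [MulLeftStrictMono G] {a : G} (ha : 1 < a) :
    StrictMono fun n : ℤ ↦ a ^ n :=
  strictMono_int_of_lt_succ fun n ↦ by
    rw [zpow_add_one]
    exact lt_mul_of_one_lt_right' (a ^ n) ha

lemma exists_zpow_le_lt_zpow_add_one [MulLeftStrictMono G]
    (harch : IsArchimedeanOrdering (G := G) (· < ·)) {a : G} (ha : 1 < a) (x : G) :
    ∃ m : ℤ, a ^ m ≤ x ∧ x < a ^ (m + 1) := by
  have hmono := strictMono_zpow_of_one_lt ha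
  obtain ⟨n, hn_lo, hn_hi⟩ := harch a x ha.ne'
  obtain ⟨m, hm, hmax⟩ := Int.exists_greatest_of_bdd (P := fun m : ℤ ↦ a ^ m ≤ x)
    ⟨n, fun m hm ↦ (hmono.lt_iff_lt.mp (hm.trans_lt hn_hi)).le⟩ ⟨-n, hn_lo.le⟩
  refine ⟨m, hm, not_le.mp fun h ↦ ?_⟩
  have := hmax _ h
  omega

lemma eq_zpow_of_forall_one_lt_le [MulLeftMono G]
    (harch : IsArchimedeanOrdering (G := G) (· < ·)) {a : G} (ha : 1 < a)
    (hmin : ∀ b : G, 1 < b → a ≤ b) (x : G) : ∃ m : ℤ, x = a ^ m := by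
  obtain ⟨m, hm_le, hm_lt⟩ := exists_zpow_le_lt_zpow_add_one harch ha x
  have h_one_le : 1 ≤ (a ^ m)⁻¹ * x := le_inv_mul_iff_mul_le.mpr (by simpa using hm_le)
  have h_lt : (a ^ m)⁻¹ * x < a := inv_mul_lt_iff_lt_mul.mpr (by rwa [← zpow_add_one])
  have h_eq : (a ^ m)⁻¹ * x = 1 :=
    le_antisymm (not_lt.mp fun h ↦ (hmin _ h).not_gt h_lt) h_one_le
  exact ⟨m, (inv_mul_eq_one.mp h_eq).symm⟩

lemma exists_one_lt_mul_self_le_s7 [MulLeftStrictMono G] [MulRightStrictMono G] {b ε : G}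
    (hb : 1 < b) (hbε : b < ε) : ∃ δ : G, 1 < δ ∧ δ * δ ≤ ε := by
  by_cases hbb : b * b ≤ ε
  · exact ⟨b, hb, hbb⟩
  -- otherwise `δ = b⁻¹ * ε` lies strictly between `1` and `b`, and `δ * δ < b * δ = ε`
  refine ⟨b⁻¹ * ε, lt_inv_mul_iff_mul_lt.mpr (by rwa [mul_one]), le_of_lt ?_⟩
  calc b⁻¹ * ε * (b⁻¹ * ε) < b * (b⁻¹ * ε) :=
        mul_lt_mul_left (inv_mul_lt_iff_lt_mul.mpr (not_le.mp hbb)) _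
    _ = ε := mul_inv_cancel_left b ε

lemma mul_swap_lt_mul_mul_mul_self [MulLeftMono G] [MulRightMono G]
    (harch : IsArchimedeanOrdering (G := G) (· < ·)) {δ : G} (hδ : 1 < δ) (x y : G) :
    y * x < x * y * (δ * δ) := by
  obtain ⟨m, hxm, hxm'⟩ := exists_zpow_le_lt_zpow_add_one harch hδ x
  obtain ⟨n, hyn, hyn'⟩ := exists_zpow_le_lt_zpow_add_one harch hδ y
  calc y * x < δ ^ (n + 1) * δ ^ (m + 1) := mul_lt_mul_of_lt_of_lt hyn' hxm'
    _ = δ ^ m * δ ^ n * (δ * δ) := by group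
    _ ≤ x * y * (δ * δ) := mul_le_mul_left (mul_le_mul' hxm hyn) _

lemma not_mul_lt_mul_swap [MulLeftMono G] [MulRightMono G]
    (harch : IsArchimedeanOrdering (G := G) (· < ·)) (x y : G) : ¬ x * y < y * x := by
  intro hxy
  set ε := (x * y)⁻¹ * (y * x)
  have hε : 1 < ε := lt_inv_mul_iff_mul_lt.mpr (by rwa [mul_one])
  by_cases hbetween : ∃ b : G, 1 < b ∧ b < ε
  · obtain ⟨b, hb, hbε⟩ := hbetween
    obtain ⟨δ, hδ, hδε⟩ := exists_one_lt_mul_self_le_s7 hb hbε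
    have := (mul_swap_lt_mul_mul_mul_self harch hδ x y).trans_le (mul_le_mul_right hδε _)
    rw [mul_inv_cancel_left] at this
    exact this.false
  push Not at hbetween
  obtain ⟨m, hm⟩ := eq_zpow_of_forall_one_lt_le harch hε hbetween x
  obtain ⟨n, hn⟩ := eq_zpow_of_forall_one_lt_le harch hε hbetween y
  rw [hm, hn] at hxy
  exact hxy.ne (zpow_mul_comm ε m n)

theorem mul_comm_of_isArchimedeanOrdering [MulLeftMono G] [MulRightMono G]
    (harch : IsArchimedeanOrdering (G := G) (· < ·)) (x y : G) : x * y = y * x :=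
  le_antisymm (not_lt.mp (not_mul_lt_mul_swap harch y x))
    (not_lt.mp (not_mul_lt_mul_swap harch x y))

end ArchimedeanBiOrdered

lemma mulArchimedean_of_isArchimedeanOrdering {G : Type*} [CommGroup G] [LinearOrder G]
    [IsOrderedMonoid G] (harch : IsArchimedeanOrdering (G := G) (· < ·)) : MulArchimedean G where
  arch x y hy := by
    obtain ⟨n, -, hn⟩ := harch y x hy.ne'
    refine ⟨n.toNat, hn.le.trans ?_⟩
    rw [← zpow_natCast]
    exact zpow_le_zpow_right hy.le (Int.self_le_toNat n)

lemma MulArchimedean.exists_strictMono_map_mul_eq_add {G : Type*} [CommGroup G] [LinearOrder G]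
    [IsOrderedMonoid G] [MulArchimedean G] :
    ∃ f : G → ℝ, (∀ g h : G, f (g * h) = f g + f h) ∧ StrictMono f := by
  obtain ⟨f, hf⟩ := Archimedean.exists_orderAddMonoidHom_real_injective (Additive G)
  exact ⟨fun g ↦ f (Additive.ofMul g), fun g h ↦ map_add f _ _,
    fun _ _ h ↦ f.monotone'.strictMono_of_injective hf h⟩

theorem holder_theorem
    {G : Type*} [Group G]
    (lt : G → G → Prop) (hlt : IsBiOrdering lt)
    (harch : IsArchimedeanOrdering lt) :
    (∃ f : G → ℝ, Function.Injective f ∧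
      (∀ g h : G, f (g * h) = f g + f h) ∧
      (∀ g h : G, lt g h → f g < f h)) ∧
    ∀ a b : G, a * b = b * a := by
  obtain ⟨hsto, hleft, hright⟩ := hlt
  let _ : LinearOrder G := @linearOrderOfSTO G lt hsto (Classical.decRel lt)
  have _ : MulLeftStrictMono G := ⟨fun f _ _ h ↦ hleft f _ _ h⟩
  have _ : MulRightStrictMono G := ⟨fun f _ _ h ↦ hright f _ _ h⟩
  have _ : MulLeftMono G := covariantClass_le_of_lt _ _ _
  have _ : MulRightMono G := covariantClass_le_of_lt _ _ _
  have hcomm := mul_comm_of_isArchimedeanOrdering harch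
  let _ : CommGroup G := { ‹Group G› with mul_comm := hcomm }
  have _ : IsOrderedMonoid G :=
    ⟨fun _ _ h c ↦ mul_le_mul_left h c, fun _ _ h c ↦ mul_le_mul_right h c⟩
  have _ := mulArchimedean_of_isArchimedeanOrdering harch
  obtain ⟨f, hf_mul, hf_mono⟩ := MulArchimedean.exists_strictMono_map_mul_eq_add (G := G)
  exact ⟨⟨f, hf_mono.injective, hf_mul, fun _ _ h ↦ hf_mono h⟩, hcomm⟩
end

section
/- Let G be a nontrivial finitely generated group and φ an automorphism of G, and suppose the semidirect product G ⋊_φ ℤ (with the generator 1 ∈ ℤ acting by φ) is bi-orderable. Then the characteristic polynomial of the induced ℚ-linear endomorphism φ_* ⊗ id of (G/G') ⊗_ℤ ℚ has a positive real root: there exists a real number r > 0 at which this characteristic polynomial (coefficients viewed in ℝ) vanishes. -/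
open scoped TensorProduct

/-!
Restricting the bi-ordering to `G` makes `G` a bi-ordered group on which `φ` is order preserving.
An element `e > 1` bounding the finitely many generators and their inverses dominates every element
of `G` by its powers, and then the Hölder-type ratio `powRatio e g = sup {m / n | e ^ m < g ^ n}`
is a nonzero homomorphism `τ : G → ℝ`. It is additive because, when `h * g ≤ g * h`, we have
`(g * h) ^ n ≤ g ^ n * h ^ n` and `h ^ n * g ^ n ≤ (h * g) ^ n`, while `τ (g * h) = τ (h * g)`
as `τ` is conjugation invariant. Its positive cone `{g | e < g ^ n for some n}` does not depend on
the choice of `e`, so it is `φ`-invariant, and two real characters with the same positive cone are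
proportional: `τ ∘ φ = α • τ` with `α > 0`. Finally `τ` factors through `(G/G') ⊗ ℚ`, where it is
an eigenvector of the transpose of `φ_*` with eigenvalue `α`, so `α` is a root of the
characteristic polynomial by Cayley–Hamilton.
-/

open Filter Polynomial Topology

theorem AddMonoidHom.eq_smul_of_pos_iff_pos {A : Type*} [AddGroup A] (σ τ : A →+ ℝ)
    (h : ∀ a, 0 < τ a ↔ 0 < σ a) {a₀ : A} (ha₀ : 0 < τ a₀) : σ = (σ a₀ / τ a₀) • τ := by
  have hσ₀ : 0 < σ a₀ := (h a₀).1 ha₀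
  have cut : ∀ (ρ : A →+ ℝ), 0 < ρ a₀ → ∀ (a : A) (q : ℚ),
      ρ a / ρ a₀ < q ↔ 0 < ρ (q.num • a₀ - q.den • a) := by
    intro ρ hρ a q
    rw [map_sub, map_zsmul, map_nsmul, zsmul_eq_mul, nsmul_eq_mul, Rat.cast_def,
      div_lt_div_iff₀ hρ (by positivity), sub_pos, mul_comm (ρ a)]
  ext a
  have hratio : τ a / τ a₀ = σ a / σ a₀ :=
    eq_of_forall_lt_rat_iff_lt fun q => by rw [cut τ ha₀, cut σ hσ₀, h]
  rw [AddMonoidHom.smul_apply, smul_eq_mul, div_mul_eq_mul_div, eq_div_iff ha₀.ne']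
  rw [div_eq_div_iff ha₀.ne' hσ₀.ne'] at hratio
  linarith

section OrderedGroup

variable {G : Type*} [Group G] [Preorder G] [MulLeftMono G] [MulRightMono G]

theorem exists_le_pow_and_inv_le_pow_of_mem_closure {S : Set G} {e : G}
    (hS : ∀ s ∈ S, s ≤ e ∧ s⁻¹ ≤ e) {g : G} (hg : g ∈ Subgroup.closure S) :
    ∃ n : ℕ, g ≤ e ^ n ∧ g⁻¹ ≤ e ^ n := by
  induction hg using Subgroup.closure_induction with
  | mem s hs => exact ⟨1, by simpa using hS s hs⟩
  | one => exact ⟨0, by simp⟩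
  | mul a b _ _ ha hb =>
    obtain ⟨m, ham, ham'⟩ := ha
    obtain ⟨n, hbn, hbn'⟩ := hb
    refine ⟨m + n, ?_, ?_⟩
    · rw [pow_add]
      exact mul_le_mul' ham hbn
    · rw [mul_inv_rev, add_comm, pow_add]
      exact mul_le_mul' hbn' ham'
  | inv a _ ha =>
    obtain ⟨n, han, han'⟩ := ha
    exact ⟨n, han', by rwa [inv_inv]⟩

theorem pow_mul_le_zpow_mul {g e : G} {n : ℕ} {m : ℤ} (h : g ^ n ≤ e ^ m) (k : ℕ) :
    g ^ (n * k) ≤ e ^ (m * k) := by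
  rw [pow_mul, zpow_mul, zpow_natCast]
  exact pow_le_pow_left' h k

theorem pow_mul_le_mul_pow_of_mul_le_mul {g h : G} (hc : h * g ≤ g * h) (n : ℕ) :
    h ^ n * g ≤ g * h ^ n := by
  induction n with
  | zero => simp
  | succ n ih =>
    calc h ^ (n + 1) * g = h * (h ^ n * g) := by rw [pow_succ', mul_assoc]
      _ ≤ h * (g * h ^ n) := mul_le_mul_right ih h
      _ = h * g * h ^ n := (mul_assoc _ _ _).symm
      _ ≤ g * h * h ^ n := mul_le_mul_left hc _
      _ = g * h ^ (n + 1) := by rw [pow_succ', mul_assoc]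

theorem mul_pow_le_pow_mul_pow {g h : G} (hc : h * g ≤ g * h) (n : ℕ) :
    (g * h) ^ n ≤ g ^ n * h ^ n := by
  induction n with
  | zero => simp
  | succ n ih =>
    calc (g * h) ^ (n + 1) = (g * h) ^ n * (g * h) := pow_succ _ _
      _ ≤ g ^ n * h ^ n * (g * h) := mul_le_mul_left ih _
      _ = g ^ n * (h ^ n * g) * h := by simp only [mul_assoc]
      _ ≤ g ^ n * (g * h ^ n) * h :=
        mul_le_mul_left (mul_le_mul_right (pow_mul_le_mul_pow_of_mul_le_mul hc n) _) _
      _ = g ^ (n + 1) * h ^ (n + 1) := by simp only [pow_succ, mul_assoc]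

theorem pow_mul_pow_le_mul_pow {g h : G} (hc : h * g ≤ g * h) (n : ℕ) :
    h ^ n * g ^ n ≤ (h * g) ^ n := by
  have hc' : h⁻¹ * g⁻¹ ≤ g⁻¹ * h⁻¹ := by
    rwa [← mul_inv_rev, ← mul_inv_rev, inv_le_inv_iff]
  have := mul_pow_le_pow_mul_pow hc' n
  rwa [← mul_inv_rev, inv_pow, inv_pow, inv_pow, ← mul_inv_rev, inv_le_inv_iff] at this

end OrderedGroup

section StrictOrderedGroup

variable {G : Type*} [Group G] [Preorder G] [MulLeftStrictMono G]

theorem zpow_right_strictMono_of_one_lt {a : G} (ha : 1 < a) : StrictMono fun n : ℤ => a ^ n :=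
  strictMono_int_of_lt_succ fun n => by
    simpa only [zpow_add_one] using lt_mul_of_one_lt_right' (a ^ n) ha

theorem zpow_mul_lt_pow_mul [MulRightStrictMono G] {g e : G} {n : ℕ} {m : ℤ} (h : e ^ m < g ^ n)
    {k : ℕ} (hk : k ≠ 0) : e ^ (m * k) < g ^ (n * k) := by
  rw [pow_mul, zpow_mul, zpow_natCast]
  exact pow_lt_pow_left' hk h

theorem zpow_sub_lt_of_lt_mul_mul [MulRightStrictMono G] {e y : G} {m : ℤ} {A B : ℕ}
    (h : e ^ m < e ^ A * y * e ^ B) : e ^ (m - (A + B : ℤ)) < y :=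
  calc e ^ (m - (A + B : ℤ)) = (e ^ A)⁻¹ * e ^ m * (e ^ B)⁻¹ := by
        rw [← zpow_natCast e A, ← zpow_natCast e B, ← zpow_neg, ← zpow_neg, ← zpow_add, ← zpow_add]
        ring_nf
    _ < (e ^ A)⁻¹ * (e ^ A * y * e ^ B) * (e ^ B)⁻¹ := mul_lt_mul_left (mul_lt_mul_right h _) _
    _ = y := by group

end StrictOrderedGroup

section BiOrderedGroup

variable {G : Type*} [Group G] [LinearOrder G] [MulLeftMono G] [MulRightMono G]

theorem exists_one_lt_forall_le_pow [Nontrivial G] [Group.FG G] :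
    ∃ e : G, 1 < e ∧ ∀ g : G, ∃ n : ℕ, g ≤ e ^ n := by
  obtain ⟨S, hS, hSfin⟩ := Group.fg_iff.1 ‹Group.FG G›
  obtain ⟨b, hb⟩ : ∃ b : G, 1 < b := by
    obtain ⟨x, hx⟩ := exists_ne (1 : G)
    rcases hx.lt_or_gt with h | h
    exacts [⟨x⁻¹, one_lt_inv'.2 h⟩, ⟨x, h⟩]
  obtain ⟨e, he⟩ := ((hSfin.union hSfin.inv).insert b).bddAbove
  refine ⟨e, hb.trans_le (he (Set.mem_insert _ _)), fun g => ?_⟩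
  have hSe : ∀ s ∈ S, s ≤ e ∧ s⁻¹ ≤ e := fun s hs =>
    ⟨he (.inr (.inl hs)), he (.inr (.inr (by simpa using hs)))⟩
  obtain ⟨n, hn, -⟩ := exists_le_pow_and_inv_le_pow_of_mem_closure hSe (hS ▸ Subgroup.mem_top g)
  exact ⟨n, hn⟩

theorem div_lt_div_of_zpow_lt_pow_of_pow_le_zpow {e g : G} (he : 1 < e) {m m' : ℤ} {n n' : ℕ}
    (hn : 0 < n) (hn' : 0 < n') (h : e ^ m < g ^ n) (h' : g ^ n' ≤ e ^ m') :
    (m : ℝ) / n < m' / n' := by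
  have hlt : e ^ (m * n') < e ^ (m' * n) :=
    (zpow_mul_lt_pow_mul h hn'.ne').trans_le (by rw [mul_comm n]; exact pow_mul_le_zpow_mul h' n)
  rw [div_lt_div_iff₀ (by positivity) (by positivity)]
  exact_mod_cast (zpow_right_strictMono_of_one_lt he).lt_iff_lt.1 hlt

def lowerPowRatios (e g : G) : Set ℝ :=
  {x | ∃ (m : ℤ) (n : ℕ), 0 < n ∧ e ^ m < g ^ n ∧ x = m / n}

/-- Meaningful only when `1 < e` and the powers of `e` are cofinal in `G`; otherwise the `sSup` may
be taken over an empty or unbounded set and is a junk value. -/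
noncomputable def powRatio (e g : G) : ℝ :=
  sSup (lowerPowRatios e g)

section Cofinal

variable {e : G} (he : 1 < e) (hcof : ∀ g : G, ∃ n : ℕ, g ≤ e ^ n)
include he hcof

theorem lowerPowRatios_nonempty (g : G) : (lowerPowRatios e g).Nonempty := by
  obtain ⟨N, hN⟩ := hcof g⁻¹
  refine ⟨_, -(N : ℤ) - 1, 1, one_pos, ?_, rfl⟩
  calc e ^ (-(N : ℤ) - 1) < e ^ (-(N : ℤ)) := zpow_right_strictMono_of_one_lt he (by omega)
    _ = (e ^ N)⁻¹ := by rw [zpow_neg, zpow_natCast]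
    _ ≤ g := inv_le_of_inv_le' hN
    _ = g ^ 1 := (pow_one g).symm

theorem bddAbove_lowerPowRatios (g : G) : BddAbove (lowerPowRatios e g) := by
  obtain ⟨N, hN⟩ := hcof g
  refine ⟨N, ?_⟩
  rintro _ ⟨m, n, hn, h, rfl⟩
  have := div_lt_div_of_zpow_lt_pow_of_pow_le_zpow he hn one_pos h
    (show g ^ 1 ≤ e ^ (N : ℤ) by rwa [pow_one, zpow_natCast])
  simpa using this.le

theorem div_le_powRatio {g : G} {m : ℤ} {n : ℕ} (hn : 0 < n) (h : e ^ m < g ^ n) :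
    (m : ℝ) / n ≤ powRatio e g :=
  le_csSup (bddAbove_lowerPowRatios he hcof g) ⟨m, n, hn, h, rfl⟩

theorem powRatio_le_div {g : G} {m : ℤ} {n : ℕ} (hn : 0 < n) (h : g ^ n ≤ e ^ m) :
    powRatio e g ≤ m / n := by
  refine csSup_le (lowerPowRatios_nonempty he hcof g) ?_
  rintro _ ⟨m', n', hn', h', rfl⟩
  exact (div_lt_div_of_zpow_lt_pow_of_pow_le_zpow he hn' hn h' h).le

theorem exists_zpow_lt_pow_of_lt_powRatio {g : G} {c : ℝ} (h : c < powRatio e g) :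
    ∃ (m : ℤ) (n : ℕ), 0 < n ∧ e ^ m < g ^ n ∧ c < m / n := by
  obtain ⟨_, ⟨m, n, hn, hmn, rfl⟩, hc⟩ :=
    exists_lt_of_lt_csSup (lowerPowRatios_nonempty he hcof g) h
  exact ⟨m, n, hn, hmn, hc⟩

theorem exists_pow_le_zpow_of_powRatio_lt {g : G} {c : ℝ} (h : powRatio e g < c) :
    ∃ (m : ℤ) (n : ℕ), 0 < n ∧ g ^ n ≤ e ^ m ∧ (m : ℝ) / n < c := by
  obtain ⟨q, hq, hqc⟩ := exists_rat_btwn h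
  rw [Rat.cast_def] at hq hqc
  exact ⟨q.num, q.den, q.pos, le_of_not_gt fun hlt => (div_le_powRatio he hcof q.pos hlt).not_gt hq,
    hqc⟩

theorem powRatio_pos_iff {g : G} : 0 < powRatio e g ↔ ∃ n : ℕ, e < g ^ n := by
  constructor
  · intro h
    obtain ⟨m, n, hn, hmn, hpos⟩ := exists_zpow_lt_pow_of_lt_powRatio he hcof h
    have hm : (1 : ℤ) ≤ m := by
      have : (0 : ℝ) < m := (div_pos_iff_of_pos_right (by positivity)).1 hpos
      exact_mod_cast this
    refine ⟨n, lt_of_le_of_lt ?_ hmn⟩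
    simpa using (zpow_right_strictMono_of_one_lt he).monotone hm
  · rintro ⟨n, hn⟩
    have hn0 : 0 < n := Nat.pos_of_ne_zero fun h0 => by simp [h0] at hn; exact hn.not_gt he
    have := div_le_powRatio he hcof hn0 (m := 1) (by rwa [zpow_one])
    exact lt_of_lt_of_le (by positivity) this

theorem powRatio_le_of_pow_le {g h a b : G} (H : ∀ n : ℕ, g ^ n ≤ a * h ^ n * b) :
    powRatio e g ≤ powRatio e h := by
  obtain ⟨A, hA⟩ := hcof a
  obtain ⟨B, hB⟩ := hcof b
  refine csSup_le (lowerPowRatios_nonempty he hcof g) ?_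
  rintro _ ⟨m, n, hn, hmn, rfl⟩
  have key : ∀ k : ℕ, 0 < k → (m : ℝ) / n - (A + B) / n / k ≤ powRatio e h := by
    intro k hk
    have hlt : e ^ (m * k) < e ^ A * h ^ (n * k) * e ^ B :=
      calc e ^ (m * k) < g ^ (n * k) := zpow_mul_lt_pow_mul hmn hk.ne'
        _ ≤ a * h ^ (n * k) * b := H _
        _ ≤ e ^ A * h ^ (n * k) * e ^ B := mul_le_mul' (mul_le_mul_left hA _) hB
    calc (m : ℝ) / n - (A + B) / n / k = ((m * k - (A + B : ℤ) : ℤ) : ℝ) / ((n * k : ℕ) : ℝ) := by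
          push_cast; field_simp
      _ ≤ powRatio e h := div_le_powRatio he hcof (by positivity) (zpow_sub_lt_of_lt_mul_mul hlt)
  have hlim : Tendsto (fun k : ℕ => (m : ℝ) / n - (A + B) / n / k) atTop (𝓝 ((m : ℝ) / n)) := by
    simpa using (tendsto_const_div_atTop_nhds_zero_nat ((A + B) / n : ℝ)).const_sub ((m : ℝ) / n)
  exact le_of_tendsto hlim (eventually_atTop.2 ⟨1, key⟩)

theorem powRatio_conj (x g : G) : powRatio e (x * g * x⁻¹) = powRatio e g :=
  le_antisymm (powRatio_le_of_pow_le he hcof fun n => conj_pow.le)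
    (powRatio_le_of_pow_le he hcof (a := x⁻¹) (b := x) fun n => le_of_eq (by rw [conj_pow]; group))

theorem powRatio_mul_comm (g h : G) : powRatio e (g * h) = powRatio e (h * g) := by
  simpa [mul_assoc] using powRatio_conj he hcof g (h * g)

theorem powRatio_le_add {x a b : G} (H : ∀ n : ℕ, x ^ n ≤ a ^ n * b ^ n) :
    powRatio e x ≤ powRatio e a + powRatio e b := by
  refine le_of_forall_pos_lt_add fun ε hε => ?_
  obtain ⟨m₁, n₁, hn₁, ha, hm₁⟩ :=
    exists_pow_le_zpow_of_powRatio_lt he hcof (lt_add_of_pos_right (powRatio e a) (half_pos hε))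
  obtain ⟨m₂, n₂, hn₂, hb, hm₂⟩ :=
    exists_pow_le_zpow_of_powRatio_lt he hcof (lt_add_of_pos_right (powRatio e b) (half_pos hε))
  have hx : x ^ (n₁ * n₂) ≤ e ^ (m₁ * n₂ + n₁ * m₂) :=
    calc x ^ (n₁ * n₂) ≤ a ^ (n₁ * n₂) * b ^ (n₁ * n₂) := H _
      _ ≤ e ^ (m₁ * n₂) * e ^ (m₂ * n₁) :=
        mul_le_mul' (pow_mul_le_zpow_mul ha n₂)
          (by rw [mul_comm n₁]; exact pow_mul_le_zpow_mul hb n₁)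
      _ = e ^ (m₁ * n₂ + n₁ * m₂) := by rw [← zpow_add, mul_comm m₂]
  calc powRatio e x ≤ ((m₁ * n₂ + n₁ * m₂ : ℤ) : ℝ) / ((n₁ * n₂ : ℕ) : ℝ) :=
        powRatio_le_div he hcof (by positivity) hx
    _ = (m₁ : ℝ) / n₁ + m₂ / n₂ := by
        rw [div_add_div _ _ (by positivity) (by positivity)]; push_cast; rfl
    _ < powRatio e a + powRatio e b + ε := by linarith

theorem add_le_powRatio {x a b : G} (H : ∀ n : ℕ, a ^ n * b ^ n ≤ x ^ n) :
    powRatio e a + powRatio e b ≤ powRatio e x := by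
  refine le_of_forall_pos_lt_add fun ε hε => ?_
  obtain ⟨m₁, n₁, hn₁, ha, hm₁⟩ :=
    exists_zpow_lt_pow_of_lt_powRatio he hcof (sub_lt_self (powRatio e a) (half_pos hε))
  obtain ⟨m₂, n₂, hn₂, hb, hm₂⟩ :=
    exists_zpow_lt_pow_of_lt_powRatio he hcof (sub_lt_self (powRatio e b) (half_pos hε))
  have hx : e ^ (m₁ * n₂ + n₁ * m₂) < x ^ (n₁ * n₂) :=
    calc e ^ (m₁ * n₂ + n₁ * m₂) = e ^ (m₁ * n₂) * e ^ (m₂ * n₁) := by rw [← zpow_add, mul_comm m₂]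
      _ < a ^ (n₁ * n₂) * b ^ (n₁ * n₂) :=
        mul_lt_mul_of_lt_of_lt (zpow_mul_lt_pow_mul ha hn₂.ne')
          (by rw [mul_comm n₁]; exact zpow_mul_lt_pow_mul hb hn₁.ne')
      _ ≤ x ^ (n₁ * n₂) := H _
  calc powRatio e a + powRatio e b < (m₁ : ℝ) / n₁ + m₂ / n₂ + ε := by linarith
    _ = ((m₁ * n₂ + n₁ * m₂ : ℤ) : ℝ) / ((n₁ * n₂ : ℕ) : ℝ) + ε := by
        rw [div_add_div _ _ (by positivity) (by positivity)]; push_cast; rfl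
    _ ≤ powRatio e x + ε := by gcongr; exact div_le_powRatio he hcof (by positivity) hx

theorem powRatio_mul (g h : G) : powRatio e (g * h) = powRatio e g + powRatio e h := by
  wlog hc : h * g ≤ g * h generalizing g h
  · rw [powRatio_mul_comm he hcof, this h g (le_of_not_ge hc), add_comm]
  refine le_antisymm (powRatio_le_add he hcof (mul_pow_le_pow_mul_pow hc)) ?_
  rw [powRatio_mul_comm he hcof, add_comm]
  exact add_le_powRatio he hcof (pow_mul_pow_le_mul_pow hc)

end Cofinal

theorem exists_lt_pow_of_lt_pow {e e' g : G} (he : 1 < e) {k : ℕ} (hk : e ≤ e' ^ k) {n : ℕ}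
    (h : e' < g ^ n) : e < g ^ (n * k) := by
  have hk0 : k ≠ 0 := by rintro rfl; exact (pow_zero e' ▸ hk).not_gt he
  rw [pow_mul]
  exact hk.trans_lt (pow_lt_pow_left' hk0 h)

theorem powRatio_pos_iff_of_cofinal {e e' : G} (he : 1 < e) (hcof : ∀ g : G, ∃ n : ℕ, g ≤ e ^ n)
    (he' : 1 < e') (hcof' : ∀ g : G, ∃ n : ℕ, g ≤ e' ^ n) (g : G) :
    0 < powRatio e g ↔ 0 < powRatio e' g := by
  obtain ⟨k, hk⟩ := hcof' e
  obtain ⟨k', hk'⟩ := hcof e'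
  rw [powRatio_pos_iff he hcof, powRatio_pos_iff he' hcof']
  exact ⟨fun ⟨n, hn⟩ => ⟨_, exists_lt_pow_of_lt_pow he' hk' hn⟩,
    fun ⟨n, hn⟩ => ⟨_, exists_lt_pow_of_lt_pow he hk hn⟩⟩

theorem powRatio_map_pos_iff {e : G} (he : 1 < e) (hcof : ∀ g : G, ∃ n : ℕ, g ≤ e ^ n)
    {φ : G ≃* G} (hφ : StrictMono φ) (g : G) : 0 < powRatio e (φ g) ↔ 0 < powRatio e g := by
  have he' : 1 < φ.symm e := hφ.lt_iff_lt.1 (by simpa using he)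
  have hcof' : ∀ g : G, ∃ n : ℕ, g ≤ φ.symm e ^ n := fun g =>
    (hcof (φ g)).imp fun n hn => hφ.le_iff_le.1 (by simpa using hn)
  rw [powRatio_pos_iff he hcof, powRatio_pos_iff_of_cofinal he hcof he' hcof',
    powRatio_pos_iff he' hcof']
  exact exists_congr fun n => by simpa using hφ.lt_iff_lt (a := φ.symm e) (b := g ^ n)

theorem exists_addMonoidHom_apply_map_eq_mul [Nontrivial G] [Group.FG G] {φ : G ≃* G}
    (hφ : StrictMono φ) :
    ∃ (τ : Additive G →+ ℝ) (α : ℝ), 0 < α ∧ τ ≠ 0 ∧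
      ∀ g : G, τ (.ofMul (φ g)) = α * τ (.ofMul g) := by
  obtain ⟨e, he, hcof⟩ := exists_one_lt_forall_le_pow (G := G)
  let τ : Additive G →+ ℝ :=
    AddMonoidHom.mk' (fun g => powRatio e g.toMul) fun g h => powRatio_mul he hcof g.toMul h.toMul
  let σ : Additive G →+ ℝ := τ.comp (MulEquiv.toAdditive φ).toAddMonoidHom
  have hτe : 0 < τ (.ofMul e) :=
    (powRatio_pos_iff he hcof).2 ⟨2, by simpa [pow_two] using lt_mul_of_one_lt_right' e he⟩
  have hστ := σ.eq_smul_of_pos_iff_pos τ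
    (fun g => (powRatio_map_pos_iff he hcof hφ g.toMul).symm) hτe
  refine ⟨τ, σ (.ofMul e) / τ (.ofMul e), div_pos ((powRatio_map_pos_iff he hcof hφ e).2 hτe) hτe,
    fun h0 => hτe.ne' (by rw [h0]; rfl), fun g => ?_⟩
  exact DFunLike.congr_fun hστ (.ofMul g)

end BiOrderedGroup

theorem apply_aeval_eq_aeval_mul {R M S : Type*} [CommSemiring R] [AddCommMonoid M] [Module R M]
    [CommSemiring S] [Algebra R S] (f : Module.End R M) (T : M →ₗ[R] S) {α : S}
    (hT : ∀ v, T (f v) = α * T v) (p : R[X]) (v : M) : T (aeval f p v) = aeval α p * T v := by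
  have hpow : ∀ (n : ℕ) (v : M), T ((f ^ n) v) = α ^ n * T v := by
    intro n
    induction n with
    | zero => simp
    | succ n ih => intro v; rw [pow_succ', Module.End.mul_apply, hT, ih, pow_succ', mul_assoc]
  induction p using Polynomial.induction_on' with
  | add p q hp hq => simp only [map_add, LinearMap.add_apply, hp, hq, add_mul]
  | monomial n c =>
    rw [aeval_monomial, aeval_monomial, Module.End.mul_apply, Module.algebraMap_end_apply,
      map_smul, hpow, Algebra.smul_def, mul_assoc]

theorem aeval_charpoly_eq_zero_of_apply_eq_mul {R M S : Type*} [CommRing R] [AddCommGroup M]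
    [Module R M] [Module.Free R M] [Module.Finite R M] [CommRing S] [NoZeroDivisors S]
    [Algebra R S] (f : Module.End R M) (T : M →ₗ[R] S) (hT0 : T ≠ 0) {α : S}
    (hT : ∀ v, T (f v) = α * T v) : aeval α f.charpoly = 0 := by
  obtain ⟨v, hv⟩ : ∃ v, T v ≠ 0 := by
    by_contra! h
    exact hT0 (LinearMap.ext h)
  have := apply_aeval_eq_aeval_mul f T hT f.charpoly v
  rw [LinearMap.aeval_self_charpoly, LinearMap.zero_apply, map_zero] at this
  exact (mul_eq_zero.1 this.symm).resolve_right hv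

theorem aeval_charpoly_baseChange_rat_eq_zero {A : Type*} [AddCommGroup A] [Module.Finite ℤ A]
    (L : A →+ A) (T : A →+ ℝ) (hT0 : T ≠ 0) {α : ℝ} (hT : ∀ a, T (L a) = α * T a) :
    aeval α (L.toIntLinearMap.baseChange ℚ).charpoly = 0 := by
  refine aeval_charpoly_eq_zero_of_apply_eq_mul _ (T.toIntLinearMap.liftBaseChange ℚ) ?_ ?_
  · intro h
    refine hT0 (AddMonoidHom.ext fun a => ?_)
    simpa using LinearMap.congr_fun h (1 ⊗ₜ a)
  · intro v
    induction v using TensorProduct.induction_on with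
    | zero => simp
    | tmul q a => simp [hT]
    | add v w hv hw => simp only [map_add, hv, hw, mul_add]

instance {G : Type*} [Group G] [Group.FG G] : Group.FG (Abelianization G) :=
  Group.fg_of_surjective (f := Abelianization.of) QuotientGroup.mk_surjective

theorem aeval_charpoly_abelianizationMap_eq_zero {G : Type*} [Group G] [Group.FG G] (φ : G →* G)
    (τ : Additive G →+ ℝ) (hτ0 : τ ≠ 0) {α : ℝ}
    (hτ : ∀ g : G, τ (.ofMul (φ g)) = α * τ (.ofMul g)) :
    aeval α ((MonoidHom.toAdditive (Abelianization.map φ)).toIntLinearMap.baseChange ℚ).charpoly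
      = 0 := by
  let T : Additive (Abelianization G) →+ ℝ :=
    MonoidHom.toAdditiveLeft (Abelianization.lift (MonoidHom.toAdditiveLeft.symm τ))
  have hT : ∀ g : G, T (.ofMul (Abelianization.of g)) = τ (.ofMul g) := fun g => by simp [T]
  refine aeval_charpoly_baseChange_rat_eq_zero _ T ?_ ?_
  · intro h0
    refine hτ0 (AddMonoidHom.ext fun g => ?_)
    simpa [hT] using DFunLike.congr_fun h0 (.ofMul (Abelianization.of g.toMul))
  · intro a
    induction a using Additive.rec with | ofMul a => ?_
    induction a using QuotientGroup.induction_on with | H g => ?_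
    change T (.ofMul (Abelianization.map φ (Abelianization.of g))) =
      α * T (.ofMul (Abelianization.of g))
    rw [Abelianization.map_of, hT, hT, hτ]

namespace IsBiOrdering

variable {G H : Type*} [Group G] [Group H] {lt : H → H → Prop}

theorem comap_s10 (h : IsBiOrdering lt) {f : G →* H} (hf : Function.Injective f) :
    IsBiOrdering fun a b => lt (f a) (f b) := by
  obtain ⟨hsto, hleft, hright⟩ := h
  refine ⟨hf.isStrictTotalOrder_onFun lt, fun c a b hab => ?_, fun c a b hab => ?_⟩
  · simpa only [map_mul] using hleft (f c) _ _ hab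
  · simpa only [map_mul] using hright (f c) _ _ hab

theorem conj (h : IsBiOrdering lt) (x : H) {a b : H} (hab : lt a b) :
    lt (x * a * x⁻¹) (x * b * x⁻¹) :=
  h.2.2 _ _ _ (h.2.1 x _ _ hab)

noncomputable abbrev toLinearOrder (h : IsBiOrdering lt) : LinearOrder H :=
  haveI := h.1
  haveI := Classical.decRel lt
  linearOrderOfSTO lt

theorem mulLeftMono (h : IsBiOrdering lt) : letI := h.toLinearOrder; MulLeftMono H :=
  letI := h.toLinearOrder
  haveI : MulLeftStrictMono H := ⟨fun c _ _ hab => h.2.1 c _ _ hab⟩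
  mulLeftMono_of_mulLeftStrictMono H

theorem mulRightMono (h : IsBiOrdering lt) : letI := h.toLinearOrder; MulRightMono H :=
  letI := h.toLinearOrder
  haveI : MulRightStrictMono H := ⟨fun c _ _ hab => h.2.2 c _ _ hab⟩
  mulRightMono_of_mulRightStrictMono H

end IsBiOrdering

theorem SemidirectProduct.inl_apply_eq_conj {G : Type*} [Group G] (φ : MulAut G) (g : G) :
    (inl (φ g) : G ⋊[zpowersHom (MulAut G) φ] Multiplicative ℤ) =
      inr (.ofAdd 1) * inl g * (inr (.ofAdd 1))⁻¹ := by
  rw [← map_inv, ← inl_aut, zpowersHom_apply, toAdd_ofAdd, zpow_one]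

theorem pos_real_eigenvalue_of_biOrderable_semidirect_product
    {G : Type*} [Group G] [Nontrivial G] [Group.FG G] (φ : MulAut G)
    (hbo : BiOrderable (G ⋊[zpowersHom (MulAut G) φ] Multiplicative ℤ)) :
    haveI : Module.Finite ℤ (Additive (Abelianization G)) :=
      Module.Finite.iff_addGroup_fg.mpr
        (GroupFG.iff_add_fg.mp
          (Group.fg_of_surjective (f := Abelianization.of (G := G))
            (fun x => Quotient.inductionOn x fun g => ⟨g, rfl⟩)))
    ∃ r : ℝ, 0 < r ∧
      Polynomial.aeval r
        (LinearMap.charpoly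
          (LinearMap.baseChange ℚ
            (MonoidHom.toAdditive
              (Abelianization.map φ.toMonoidHom)).toIntLinearMap)) = 0 := by
  obtain ⟨lt, hlt⟩ := hbo
  have hG := hlt.comap_s10 SemidirectProduct.inl_injective
  let := hG.toLinearOrder
  have := hG.mulLeftMono
  have := hG.mulRightMono
  have hφ : StrictMono φ := fun a b hab => by
    change lt (SemidirectProduct.inl (φ a)) (SemidirectProduct.inl (φ b))
    rw [SemidirectProduct.inl_apply_eq_conj, SemidirectProduct.inl_apply_eq_conj]
    exact hlt.conj _ hab
  obtain ⟨τ, α, hα, hτ0, hτ⟩ := exists_addMonoidHom_apply_map_eq_mul hφ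
  exact ⟨α, hα, aeval_charpoly_abelianizationMap_eq_zero φ.toMonoidHom τ hτ0 hτ⟩
end

section
/- Let k be a positive integer and let 0 < n₁ < n₂ < ⋯ < n_k be a strictly increasing sequence of positive integers. Then for every positive real number α, the quantity (-1)^k + ∑_{j=1}^k (-1)^{k-j} (α^{n_j} + α^{-n_j}) is nonzero. In other words, the Laurent polynomial Δ(t) = (-1)^k + ∑_{j=1}^k (-1)^{k-j} (t^{n_j} + t^{-n_j}) has no positive real root. -/
/-!
Writing `f j = α ^ n_j + α ^ (-n_j) = 2 cosh (n_j log α)`, the values `f j` are at least `2` and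
nondecreasing in `j`. The alternating sum `A_k = (-1)^k + ∑_{j<k} (-1)^(k-1-j) f j` satisfies
`A_0 = 1` and `A_(k+1) = f k - A_k`, so by induction `1 ≤ A_k ≤ f_(k-1) - 1`; in particular `A_k ≠ 0`.
-/

open Real Finset

lemma zpow_add_zpow_neg_eq_two_mul_cosh {α : ℝ} (hα : 0 < α) (m : ℤ) :
    α ^ m + α ^ (-m) = 2 * cosh (m * log α) := by
  rw [cosh_eq, ← rpow_intCast, ← rpow_intCast, rpow_def_of_pos hα, rpow_def_of_pos hα]
  push_cast
  ring_nf

lemma two_le_zpow_add_zpow_neg {α : ℝ} (hα : 0 < α) (m : ℤ) : 2 ≤ α ^ m + α ^ (-m) := by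
  rw [zpow_add_zpow_neg_eq_two_mul_cosh hα]
  linarith [one_le_cosh (m * log α)]

lemma monotone_zpow_natCast_add_zpow_neg {α : ℝ} (hα : 0 < α) :
    Monotone fun m : ℕ => α ^ (m : ℤ) + α ^ (-(m : ℤ)) := by
  intro m m' h
  simp only [zpow_add_zpow_neg_eq_two_mul_cosh hα, Int.cast_natCast]
  gcongr 2 * ?_
  rw [cosh_le_cosh, abs_mul, abs_mul, Nat.abs_cast, Nat.abs_cast]
  gcongr

def alternatingSum {k : ℕ} (f : Fin k → ℝ) : ℝ :=
  (-1) ^ k + ∑ j : Fin k, (-1) ^ (k - ((j : ℕ) + 1)) * f j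

@[simp]
lemma alternatingSum_zero (f : Fin 0 → ℝ) : alternatingSum f = 1 := by
  simp [alternatingSum]

lemma alternatingSum_succ {k : ℕ} (f : Fin (k + 1) → ℝ) :
    alternatingSum f = f (Fin.last k) - alternatingSum (fun j => f j.castSucc) := by
  have hsign : ∀ j : Fin k, ((-1 : ℝ) ^ (k + 1 - ((j : ℕ) + 1))) = -(-1) ^ (k - ((j : ℕ) + 1)) := by
    intro j
    rw [show k + 1 - ((j : ℕ) + 1) = k - ((j : ℕ) + 1) + 1 by omega, pow_succ, mul_neg_one]
  simp only [alternatingSum, Fin.sum_univ_castSucc, Fin.val_castSucc, Fin.val_last, hsign, Nat.sub_self,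
    pow_succ, pow_zero]
  simp only [neg_mul, sum_neg_distrib]
  ring

lemma alternatingSum_mem_Icc {k : ℕ} {f : Fin k → ℝ} (hf : Monotone f) (h2 : ∀ j, 2 ≤ f j) {c : ℝ}
    (hc : ∀ j, f j ≤ c) (hc2 : 2 ≤ c) : alternatingSum f ∈ Set.Icc 1 (c - 1) := by
  induction k generalizing c with
  | zero => rw [alternatingSum_zero]; exact ⟨le_rfl, by linarith⟩
  | succ k ih =>
    have hlast := ih (f := fun j => f j.castSucc) (hf.comp Fin.strictMono_castSucc.monotone)
      (fun j => h2 _) (c := f (Fin.last k)) (fun j => hf (Fin.le_last _)) (h2 _)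
    rw [alternatingSum_succ]
    constructor <;> linarith [hlast.1, hlast.2, hc (Fin.last k)]

lemma one_le_alternatingSum {k : ℕ} {f : Fin k → ℝ} (hf : Monotone f) (h2 : ∀ j, 2 ≤ f j) :
    1 ≤ alternatingSum f := by
  cases k with
  | zero => simp
  | succ k => exact (alternatingSum_mem_Icc hf h2 (fun j => hf (Fin.le_last j)) (h2 _)).1

theorem lspace_alexander_polynomial_no_positive_real_root_general
    (k : ℕ) (n : Fin k → ℕ)
    (hmono : StrictMono n)
    (α : ℝ) (hα : 0 < α) :
    (-1 : ℝ) ^ k +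
      ∑ j : Fin k, (-1 : ℝ) ^ (k - ((j : ℕ) + 1)) *
        (α ^ (n j : ℤ) + α ^ (-(n j : ℤ))) ≠ 0 := by
  have h := one_le_alternatingSum (f := fun j => α ^ (n j : ℤ) + α ^ (-(n j : ℤ)))
    ((monotone_zpow_natCast_add_zpow_neg hα).comp hmono.monotone)
    (fun j => two_le_zpow_add_zpow_neg hα _)
  unfold alternatingSum at h
  linarith

theorem lspace_alexander_polynomial_no_positive_real_root
    (k : ℕ) (hk : 0 < k) (n : Fin k → ℕ)
    (hmono : StrictMono n) (hpos : ∀ j, 0 < n j)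
    (α : ℝ) (hα : 0 < α) :
    (-1 : ℝ) ^ k +
      ∑ j : Fin k, (-1 : ℝ) ^ (k - ((j : ℕ) + 1)) *
        (α ^ (n j : ℤ) + α ^ (-(n j : ℤ))) ≠ 0 :=
  lspace_alexander_polynomial_no_positive_real_root_general k n hmono α hα
end

section
/- Let n be a positive integer and let < be an Archimedean bi-ordering of the additive group ℚ^n. Then there exist real numbers α₁, …, α_n, linearly independent over ℚ, such that for all x, y ∈ ℚ^n, x < y if and only if x₁α₁ + ⋯ + x_nα_n < y₁α₁ + ⋯ + y_nα_n in ℝ. -/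
/-- An additive bi-ordering is Archimedean if for every `g ≠ 0` and every `h`
there is an integer `m` with `(-m) • g < h < m • g`. -/
def IsAddArchimedeanOrdering {A : Type*} [AddGroup A] (lt : A → A → Prop) : Prop :=
  ∀ g h : A, g ≠ 0 → ∃ m : ℤ, lt ((-m) • g) h ∧ lt h (m • g)

/-! An Archimedean bi-ordering makes `ℚ^n` an Archimedean linearly ordered group, which by
Hölder's theorem embeds into `ℝ` through an injective order-preserving additive map `f`.
Additive maps between `ℚ`-vector spaces are `ℚ`-linear, so `f x = ∑ xᵢ αᵢ` with `αᵢ = f eᵢ`,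
and injectivity of `f` is the `ℚ`-linear independence of the `αᵢ`. -/

section BiOrdering

variable {A : Type*} [AddCommGroup A]

theorem IsAddBiOrdering.isOrderedAddMonoid [LinearOrder A]
    (h : IsAddBiOrdering (A := A) (· < ·)) : IsOrderedAddMonoid A where
  add_le_add_left a b hab c := by
    rcases hab.lt_or_eq with hlt | rfl
    · exact (h.2 a b c hlt).le
    · exact le_rfl

theorem IsAddArchimedeanOrdering.archimedean [LinearOrder A] [IsOrderedAddMonoid A]
    (h : IsAddArchimedeanOrdering (A := A) (· < ·)) : Archimedean A where
  arch x y hy := by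
    obtain ⟨m, -, hm⟩ := h y x hy.ne'
    refine ⟨m.toNat, ?_⟩
    rw [← natCast_zsmul]
    exact hm.le.trans (zsmul_le_zsmul_left hy.le (Int.self_le_toNat m))

theorem IsAddBiOrdering.exists_addMonoidHom_real {lt : A → A → Prop}
    (hlt : IsAddBiOrdering lt) (harch : IsAddArchimedeanOrdering lt) :
    ∃ f : A →+ ℝ, Function.Injective f ∧ ∀ x y, lt x y ↔ f x < f y := by
  have := hlt.1
  let := Classical.decRel lt
  let : LinearOrder A := linearOrderOfSTO lt
  have := hlt.isOrderedAddMonoid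
  have := harch.archimedean
  obtain ⟨f, hf⟩ := Archimedean.exists_orderAddMonoidHom_real_injective A
  have hmono : StrictMono f := f.monotone'.strictMono_of_injective hf
  exact ⟨f, hf, fun x y => hmono.lt_iff_lt.symm⟩

end BiOrdering

theorem AddMonoidHom.eq_sum_smul_single {ι M : Type*} [Fintype ι] [DecidableEq ι]
    [AddCommGroup M] [Module ℚ M] (g : (ι → ℚ) →+ M) (x : ι → ℚ) :
    g x = ∑ i, x i • g (Pi.single i 1) := by
  conv_lhs => rw [← Finset.univ_sum_single x]
  rw [map_sum]
  refine Finset.sum_congr rfl fun i _ => ?_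
  rw [← map_rat_smul, ← Pi.single_smul', smul_eq_mul, mul_one]

theorem archimedean_biordering_of_rationals_is_linear_form_general
    (n : ℕ)
    (lt : (Fin n → ℚ) → (Fin n → ℚ) → Prop)
    (hlt : IsAddBiOrdering lt) (harch : IsAddArchimedeanOrdering lt) :
    ∃ α : Fin n → ℝ, LinearIndependent ℚ α ∧
      ∀ x y : Fin n → ℚ,
        lt x y ↔ ∑ i, (x i : ℝ) * α i < ∑ i, (y i : ℝ) * α i := by
  obtain ⟨f, hf_inj, hf_lt⟩ := hlt.exists_addMonoidHom_real harch
  refine ⟨fun i => f (Pi.single i 1), ?_, fun x y => ?_⟩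
  · exact (Pi.linearIndependent_single_one (Fin n) ℚ).map' f.toRatLinearMap
      (LinearMap.ker_eq_bot.mpr hf_inj)
  · simp only [← Rat.smul_def, ← f.eq_sum_smul_single, hf_lt]

theorem archimedean_biordering_of_rationals_is_linear_form
    (n : ℕ) (hn : 0 < n)
    (lt : (Fin n → ℚ) → (Fin n → ℚ) → Prop)
    (hlt : IsAddBiOrdering lt) (harch : IsAddArchimedeanOrdering lt) :
    ∃ α : Fin n → ℝ, LinearIndependent ℚ α ∧
      ∀ x y : Fin n → ℚ,
        lt x y ↔ ∑ i, (x i : ℝ) * α i < ∑ i, (y i : ℝ) * α i :=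
  archimedean_biordering_of_rationals_is_linear_form_general n lt hlt harch
end
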